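/- Every allowed formula φ is semantically equivalent to its normalisation: ‖norm(φ, gen(φ))‖ = ‖φ‖ in every database. -/

import Mathlib

/-- First-order formulas over relation symbols `R` with arities `δ` and variables `𝒳`. -/
inductive Fml (R : Type) (δ : R → ℕ) (𝒳 : Type) : Type
  | one : Fml R δ 𝒳
  | rel (r : R) (x : Fin (δ r) → 𝒳) : Fml R δ 𝒳
  | eql (x y : 𝒳) : Fml R δ 𝒳
  | not (φ : Fml R δ 𝒳) : Fml R δ 𝒳
  | and (φ ψ : Fml R δ 𝒳) : Fml R δ 𝒳
  | or (φ ψ : Fml R δ 𝒳) : Fml R δ 𝒳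
  | ex (x : 𝒳) (φ : Fml R δ 𝒳) : Fml R δ 𝒳

variable {R : Type} {δ : R → ℕ} {𝒳 : Type}

/-- The value `‖φ‖` of a formula in the structure with domain `M` and interpretation `I`. -/
def val {M : Type} (I : ∀ r : R, Set (Fin (δ r) → M)) : Fml R δ 𝒳 → Set (𝒳 → M)
  | .one => Set.univ
  | .rel r x => {v | (fun i => v (x i)) ∈ I r}
  | .eql x y => {v | v x = v y}
  | .not φ => (val I φ)ᶜ
  | .and φ ψ => val I φ ∩ val I ψ
  | .or φ ψ => val I φ ∪ val I ψ
  | .ex x φ => {v | ∃ u ∈ val I φ, ∀ y ≠ x, u y = v y}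

/-- Free variables of a formula. -/
def FV [DecidableEq 𝒳] [Fintype 𝒳] : Fml R δ 𝒳 → Finset 𝒳
  | .one => ∅
  | .rel _ x => Finset.univ.image x
  | .eql x y => {x, y}
  | .not φ => FV φ
  | .and φ ψ => FV φ ∪ FV ψ
  | .or φ ψ => FV φ ∪ FV ψ
  | .ex x φ => FV φ \ {x}

/-- The identity relation on `𝒳` (as a set of pairs). -/
def idRel' : Set (𝒳 × 𝒳) := {p | p.1 = p.2}

/-- `EqGen R₀`: the smallest equivalence relation on `𝒳` containing `R₀`. -/
def EqGen (R₀ : Set (𝒳 × 𝒳)) : Set (𝒳 × 𝒳) :=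
  {p | Relation.EqvGen (fun a b => (a, b) ∈ R₀) p.1 p.2}

/-- `(𝒳∖{x}) × (𝒳∖{x})` as a set of pairs. -/
def offDiag (x : 𝒳) : Set (𝒳 × 𝒳) := {p | p.1 ≠ x ∧ p.2 ≠ x}

/-- The pair `(eq(φ), coeq(φ))` of the equality and coequality equivalences of `φ`. -/
def eqco : Fml R δ 𝒳 → Set (𝒳 × 𝒳) × Set (𝒳 × 𝒳)
  | .one => (idRel', idRel')
  | .rel _ _ => (idRel', idRel')
  | .eql x y => (EqGen {(x, y)}, idRel')
  | .not φ => ((eqco φ).2, (eqco φ).1)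
  | .and φ ψ => (EqGen ((eqco φ).1 ∪ (eqco ψ).1), (eqco φ).2 ∩ (eqco ψ).2)
  | .or φ ψ => ((eqco φ).1 ∩ (eqco ψ).1, EqGen ((eqco φ).2 ∪ (eqco ψ).2))
  | .ex x φ => (EqGen ((eqco φ).1 ∩ offDiag x), EqGen ((eqco φ).2 ∩ offDiag x))

/-- `eq(φ)`. -/
def eqR (φ : Fml R δ 𝒳) : Set (𝒳 × 𝒳) := (eqco φ).1

/-- `coeq(φ)`. -/
def coeqR (φ : Fml R δ 𝒳) : Set (𝒳 × 𝒳) := (eqco φ).2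

/-- `cl_E(X)`. -/
def clE (E : Set (𝒳 × 𝒳)) (X : Set 𝒳) : Set 𝒳 := {y | ∃ x ∈ X, (x, y) ∈ E}

/-- The pair `(gen₀(φ), cogen₀(φ))`. -/
def genco0 : Fml R δ 𝒳 → Set 𝒳 × Set 𝒳
  | .one => (∅, ∅)
  | .rel _ x => (Set.range x, ∅)
  | .eql _ _ => (∅, ∅)
  | .not φ => ((genco0 φ).2, (genco0 φ).1)
  | .and φ ψ =>
      (clE (eqR (φ.and ψ)) ((genco0 φ).1 ∪ (genco0 ψ).1),
       (genco0 φ).2 ∩ (genco0 ψ).2)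
  | .or φ ψ =>
      ((genco0 φ).1 ∩ (genco0 ψ).1,
       clE (EqGen (coeqR φ ∪ coeqR ψ)) ((genco0 φ).2 ∪ (genco0 ψ).2))
  | .ex x φ => ((genco0 φ).1 \ {x}, (genco0 φ).2 \ {x})

/-- `gen₀(φ)`. -/
def gen0 (φ : Fml R δ 𝒳) : Set 𝒳 := (genco0 φ).1

/-- `cogen₀(φ)`. -/
def cogen0 (φ : Fml R δ 𝒳) : Set 𝒳 := (genco0 φ).2

/-- Every subformula of the form `(∃x)ψ` satisfies `x ∈ gen₀(ψ)`. -/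
def ExOK : Fml R δ 𝒳 → Prop
  | .one => True
  | .rel _ _ => True
  | .eql _ _ => True
  | .not φ => ExOK φ
  | .and φ ψ => ExOK φ ∧ ExOK ψ
  | .or φ ψ => ExOK φ ∧ ExOK ψ
  | .ex x φ => x ∈ gen0 φ ∧ ExOK φ

/-- A formula is allowed if `FV(φ) = gen₀(φ)` and every existential subformula
`(∃x)ψ` satisfies `x ∈ gen₀(ψ)`. -/
def Allowed [DecidableEq 𝒳] [Fintype 𝒳] (φ : Fml R δ 𝒳) : Prop :=
  (↑(FV φ) : Set 𝒳) = gen0 φ ∧ ExOK φ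

/-- Positive formulas (`φ∨ψ` read as `¬(¬φ∧¬ψ)`). -/
def Positive : Fml R δ 𝒳 → Prop
  | .one => True
  | .rel _ _ => True
  | .eql _ _ => True
  | .not φ => ¬ Positive φ
  | .and φ ψ => Positive φ ∨ Positive ψ
  | .or φ ψ => Positive φ ∧ Positive ψ
  | .ex _ φ => Positive φ

/-- The diagonal `D_{x,y}`. -/
def diag {M : Type} (x y : 𝒳) : Set (𝒳 → M) := {v | v x = v y}

section Gen

variable [Fintype 𝒳] [LinearOrder 𝒳]

/-- `(∃S)φ`: existential quantification over all variables of `S`, taken in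
increasing order. -/
def exAll (S : Finset 𝒳) (φ : Fml R δ 𝒳) : Fml R δ 𝒳 :=
  (S.sort (· ≤ ·)).foldr .ex φ

/-- `φ ∨* ψ = (∃ FV(φ)∖FV(ψ))φ ∨ (∃ FV(ψ)∖FV(φ))ψ`. -/
def orStar (φ ψ : Fml R δ 𝒳) : Fml R δ 𝒳 :=
  .or (exAll (FV φ \ FV ψ) φ) (exAll (FV ψ \ FV φ) ψ)

/-- The conjunction `(x₁≈y₁)∧⋯∧(xₙ≈yₙ)` over a list of pairs, `1` if empty. -/
def conjList : List (𝒳 × 𝒳) → Fml R δ 𝒳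
  | [] => .one
  | p :: ps => ps.foldl (fun acc q => .and acc (.eql q.1 q.2)) (.eql p.1 p.2)

/-- The set of pairs occurring in a list. -/
def pairsOf (l : List (𝒳 × 𝒳)) : Set (𝒳 × 𝒳) := {p | p ∈ l}

/-- `rep` assigns to every equivalence relation on `𝒳` a minimal representation:
a list of pairs, minimal under inclusion, generating the equivalence. -/
def MinRep (rep : Set (𝒳 × 𝒳) → List (𝒳 × 𝒳)) : Prop :=
  ∀ E : Set (𝒳 × 𝒳), Equivalence (fun a b => (a, b) ∈ E) →
    EqGen (pairsOf (rep E)) = E ∧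
    ∀ R₀ ⊆ pairsOf (rep E), EqGen R₀ = E → R₀ = pairsOf (rep E)

variable (rep : Set (𝒳 × 𝒳) → List (𝒳 × 𝒳))

/-- The pair `(gen(φ), cogen(φ))` of the generator and cogenerator of `φ`.
In the conjunction case, `φ ≈∧ ψ` is the conjunction of equalities over
`rep(Eq(eq(φ∧ψ) ∖ eq(gen(φ)∧gen(ψ))))`. -/
def genco : Fml R δ 𝒳 → Fml R δ 𝒳 × Fml R δ 𝒳
  | .one => (.one, .one)
  | .rel r x => (.rel r x, .one)
  | .eql _ _ => (.one, .one)
  | .not φ => ((genco φ).2, (genco φ).1)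
  | .and φ ψ =>
      (.and (.and (genco φ).1 (genco ψ).1)
        (conjList (rep (EqGen (eqR (φ.and ψ) \ eqR ((genco φ).1.and (genco ψ).1))))),
       orStar (genco φ).2 (genco ψ).2)
  | .or φ ψ =>
      (orStar (genco φ).1 (genco ψ).1,
       .and (.and (genco φ).2 (genco ψ).2)
        (conjList (rep (EqGen (eqR ((Fml.not φ).and (Fml.not ψ)) \
          eqR ((genco φ).2.and (genco ψ).2))))))
  | .ex x φ => (.ex x (genco φ).1, .ex x (genco φ).2)

/-- `gen(φ)`. -/
def gen (φ : Fml R δ 𝒳) : Fml R δ 𝒳 := (genco rep φ).1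

/-- `cogen(φ)`. -/
def cogen (φ : Fml R δ 𝒳) : Fml R δ 𝒳 := (genco rep φ).2

end Gen

/-- The substitution `(χ)[u/w] = (∃u)(χ ∧ (u ≈ w))`. -/
def subst (χ : Fml R δ 𝒳) (u w : 𝒳) : Fml R δ 𝒳 := .ex u (.and χ (.eql u w))

/-- Iterated substitution `(χ)[u₁/w₁,…,u_k/w_k]`, applied left to right. -/
def substFold (χ : Fml R δ 𝒳) (l : List (𝒳 × 𝒳)) : Fml R δ 𝒳 :=
  l.foldl (fun acc p => subst acc p.1 p.2) χ

/-- A formula is negated if it is of the form `¬φ₁`. -/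
def isNeg : Fml R δ 𝒳 → Bool
  | .not _ => true
  | _ => false

/-- The complement `φ̄` of a formula: `φ₁` if `φ = ¬φ₁`, and `¬φ` otherwise. -/
def compl : Fml R δ 𝒳 → Fml R δ 𝒳
  | .not φ => φ
  | φ => .not φ

section Norm

variable [Fintype 𝒳] [LinearOrder 𝒳]

/-- Alignment of `φ` via `ψ` (for `FV(φ) ⊆ FV(ψ)`): `φ` itself if
`FV(φ) = FV(ψ)`, and `φ ∧ (∃FV(φ))ψ` otherwise. -/
def align (φ ψ : Fml R δ 𝒳) : Fml R δ 𝒳 :=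
  if FV φ = FV ψ then φ else .and φ (exAll (FV φ) ψ)

variable (rep : Set (𝒳 × 𝒳) → List (𝒳 × 𝒳))
variable (Y : ∀ r : R, Fin (δ r) → 𝒳) (Z : ∀ r : R, (Fin (δ r) → 𝒳) → Fin (δ r) → 𝒳)

/-- For an `n`-ary relation symbol `r` with canonical variables `y₁ʳ,…,yₙʳ` and
variables `x₁,…,xₙ`, the auxiliary variables `z₁,…,zₙ = Z r x` are pairwise
distinct and disjoint from `{y₁ʳ,…,yₙʳ, x₁,…,xₙ}`. -/
def GoodZ : Prop :=
  ∀ (r : R) (x : Fin (δ r) → 𝒳),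
    Function.Injective (Z r x) ∧ (∀ i j, Z r x i ≠ Y r j) ∧ (∀ i j, Z r x i ≠ x j)

/-- The canonical relation formula
`r(y₁ʳ/x₁,…,yₙʳ/xₙ) = (r(y₁ʳ,…,yₙʳ))[y₁ʳ/z₁,…,yₙʳ/zₙ, z₁/x₁,…,zₙ/xₙ]`. -/
def canonAtom (r : R) (x : Fin (δ r) → 𝒳) : Fml R δ 𝒳 :=
  substFold (.rel r (Y r))
    ((List.ofFn fun i => (Y r i, Z r x i)) ++ (List.ofFn fun i => (Z r x i, x i)))

/-- Combination of the two normalized conjuncts `α₁`, `α₂` (with parameter `ψ`)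
in the conjunction case of the normalization. -/
def normAnd (α₁ α₂ ψ : Fml R δ 𝒳) : Fml R δ 𝒳 :=
  if isNeg α₁ then
    if isNeg α₂ then .not (.or (align (compl α₁) ψ) (align (compl α₂) ψ))
    else .and (align α₂ ψ) (.not (align (compl α₁) ψ))
  else
    if isNeg α₂ then .and (align α₁ ψ) (.not (align (compl α₂) ψ))
    else .and α₁ α₂

/-- The normalization `norm(φ,ψ)` (`φ₁∨φ₂` is treated as `¬(¬φ₁∧¬φ₂)`). -/
def norm : Fml R δ 𝒳 → Fml R δ 𝒳 → Fml R δ 𝒳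
  | .one, _ => .one
  | .rel r x, _ => canonAtom Y Z r x
  | .eql x₁ x₂, ψ => .and ψ (.eql x₁ x₂)
  | .not φ₁, ψ => compl (norm φ₁ ψ)
  | .and φ₁ φ₂, ψ =>
      normAnd (norm φ₁ (exAll (FV ψ \ FV φ₁) ψ)) (norm φ₂ (exAll (FV ψ \ FV φ₂) ψ)) ψ
  | .or φ₁ φ₂, ψ =>
      compl (normAnd (compl (norm φ₁ (exAll (FV ψ \ FV φ₁) ψ)))
        (compl (norm φ₂ (exAll (FV ψ \ FV φ₂) ψ))) ψ)
  | .ex x φ₁, ψ =>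
      .ex x (norm φ₁ (.and (exAll (FV (gen rep φ₁) \ {x}) (gen rep φ₁)) ψ))

/-- Normalized formulas. -/
inductive Normalized : Fml R δ 𝒳 → Prop
  | one : Normalized .one
  | atom (r : R) : Normalized (.rel r (Y r))
  | eqc {φ : Fml R δ 𝒳} (x y : 𝒳) : Normalized φ → x ∈ FV φ →
      Normalized (.and φ (.eql x y))
  | andNot {φ ψ : Fml R δ 𝒳} : Normalized φ → Normalized ψ → FV φ = FV ψ →
      Normalized (.and φ (.not ψ))
  | orc {φ ψ : Fml R δ 𝒳} : Normalized φ → Normalized ψ → FV φ = FV ψ →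
      Normalized (.or φ ψ)
  | andc {φ ψ : Fml R δ 𝒳} : Normalized φ → Normalized ψ → Normalized (.and φ ψ)
  | exc {φ : Fml R δ 𝒳} (x : 𝒳) : Normalized φ → Normalized (.ex x φ)

end Norm

section Lemmas

variable {R : Type} {δ : R → ℕ} {𝒳 : Type}

/-! ### EqGen basics -/

lemma mem_EqGen_of_mem {R₀ : Set (𝒳 × 𝒳)} {p : 𝒳 × 𝒳} (h : p ∈ R₀) : p ∈ EqGen R₀ :=
  Relation.EqvGen.rel _ _ h

lemma EqGen_refl (R₀ : Set (𝒳 × 𝒳)) (a : 𝒳) : (a, a) ∈ EqGen R₀ :=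
  Relation.EqvGen.refl a

lemma EqGen_subset_of_equivalence {E : Set (𝒳 × 𝒳)}
    (hE : Equivalence (fun a b => (a, b) ∈ E)) {S : Set (𝒳 × 𝒳)} (hS : S ⊆ E) :
    EqGen S ⊆ E := by
  rintro ⟨a, b⟩ h
  simp only [EqGen, Set.mem_setOf_eq] at h
  induction h with
  | rel x y hxy => exact hS hxy
  | refl x => exact hE.refl x
  | symm x y _ ih => exact hE.symm ih
  | trans x y z _ _ ih1 ih2 => exact hE.trans ih1 ih2

lemma equivalence_EqGen (S : Set (𝒳 × 𝒳)) : Equivalence (fun a b => (a, b) ∈ EqGen S) :=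
  Relation.EqvGen.is_equivalence _

lemma equivalence_idRel' : Equivalence (fun a b : 𝒳 => (a, b) ∈ idRel') :=
  ⟨fun _ => rfl, fun h => h.symm, fun h h' => h.trans h'⟩

lemma EqGen_of_equivalence {E : Set (𝒳 × 𝒳)}
    (hE : Equivalence (fun a b => (a, b) ∈ E)) : EqGen E = E :=
  Set.Subset.antisymm (EqGen_subset_of_equivalence hE le_rfl) (fun _ h => mem_EqGen_of_mem h)

lemma equivalence_inter {E F : Set (𝒳 × 𝒳)}
    (hE : Equivalence (fun a b => (a, b) ∈ E)) (hF : Equivalence (fun a b => (a, b) ∈ F)) :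
    Equivalence (fun a b => (a, b) ∈ E ∩ F) :=
  ⟨fun a => ⟨hE.refl a, hF.refl a⟩, fun h => ⟨hE.symm h.1, hF.symm h.2⟩,
    fun h h' => ⟨hE.trans h.1 h'.1, hF.trans h.2 h'.2⟩⟩

/-- `eqR φ` and `coeqR φ` are equivalence relations. -/
lemma eqco_equivalence (φ : Fml R δ 𝒳) :
    Equivalence (fun a b => (a, b) ∈ eqR φ) ∧ Equivalence (fun a b => (a, b) ∈ coeqR φ) := by
  induction φ with
  | one => exact ⟨equivalence_idRel', equivalence_idRel'⟩
  | rel r x => exact ⟨equivalence_idRel', equivalence_idRel'⟩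
  | eql x y => exact ⟨equivalence_EqGen _, equivalence_idRel'⟩
  | not φ ih => exact ⟨ih.2, ih.1⟩
  | and φ ψ ih ih' => exact ⟨equivalence_EqGen _, equivalence_inter ih.2 ih'.2⟩
  | or φ ψ ih ih' => exact ⟨equivalence_inter ih.1 ih'.1, equivalence_EqGen _⟩
  | ex x φ ih => exact ⟨equivalence_EqGen _, equivalence_EqGen _⟩

lemma eqR_equiv (φ : Fml R δ 𝒳) : Equivalence (fun a b => (a, b) ∈ eqR φ) :=
  (eqco_equivalence φ).1

lemma coeqR_equiv (φ : Fml R δ 𝒳) : Equivalence (fun a b => (a, b) ∈ coeqR φ) :=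
  (eqco_equivalence φ).2

/-! ### val basics -/

lemma val_congr {M : Type} {I : ∀ r : R, Set (Fin (δ r) → M)} [DecidableEq 𝒳] [Fintype 𝒳]
    (φ : Fml R δ 𝒳) : ∀ {u v : 𝒳 → M}, (∀ y ∈ FV φ, u y = v y) → (u ∈ val I φ ↔ v ∈ val I φ) := by
  induction φ with
  | one => intro u v _; simp [val]
  | rel r x =>
    intro u v h
    have : (fun i => u (x i)) = fun i => v (x i) := by
      funext i; exact h _ (Finset.mem_image_of_mem x (Finset.mem_univ i))
    simp only [val, Set.mem_setOf_eq, this]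
  | eql x y =>
    intro u v h
    have hx : u x = v x := h x (by simp [FV])
    have hy : u y = v y := h y (by simp [FV])
    simp only [val, Set.mem_setOf_eq, hx, hy]
  | not φ ih =>
    intro u v h
    have := ih (u := u) (v := v) (fun y hy => h y (by simpa [FV] using hy))
    simp only [val, Set.mem_compl_iff, this]
  | and φ ψ ih ih' =>
    intro u v h
    have h1 := ih (u := u) (v := v) (fun y hy => h y (by simp [FV, hy]))
    have h2 := ih' (u := u) (v := v) (fun y hy => h y (by simp [FV, hy]))
    simp only [val, Set.mem_inter_iff, h1, h2]
  | or φ ψ ih ih' =>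
    intro u v h
    have h1 := ih (u := u) (v := v) (fun y hy => h y (by simp [FV, hy]))
    have h2 := ih' (u := u) (v := v) (fun y hy => h y (by simp [FV, hy]))
    simp only [val, Set.mem_union, h1, h2]
  | ex x φ ih =>
    intro u v h
    simp only [val, Set.mem_setOf_eq]
    constructor
    · rintro ⟨w, hw, hagree⟩
      refine ⟨fun y => if y = x then w x else v y, ?_, ?_⟩
      · refine (ih ?_).mp hw
        intro y hy
        by_cases hyx : y = x
        · subst hyx; simp
        · simp only [hyx, if_false]
          rw [hagree y hyx]
          exact h y (by simp [FV, hy, hyx])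
      · intro y hy; simp [hy]
    · rintro ⟨w, hw, hagree⟩
      refine ⟨fun y => if y = x then w x else u y, ?_, ?_⟩
      · refine (ih ?_).mp hw
        intro y hy
        by_cases hyx : y = x
        · subst hyx; simp
        · simp only [hyx, if_false]
          rw [hagree y hyx]
          exact (h y (by simp [FV, hy, hyx])).symm
      · intro y hy; simp [hy]

lemma val_compl {M : Type} {I : ∀ r : R, Set (Fin (δ r) → M)} (φ : Fml R δ 𝒳) :
    val I (compl φ) = (val I φ)ᶜ := by
  cases φ
  case not φ => show val I φ = (val I φ.not)ᶜ; simp [val]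
  all_goals rfl

lemma compl_compl_of_not_isNeg {φ : Fml R δ 𝒳} (h : isNeg φ = false) :
    compl (compl φ) = φ := by
  cases φ
  case not φ => simp [isNeg] at h
  all_goals rfl

lemma isNeg_compl {φ : Fml R δ 𝒳} (h : isNeg φ = false) : isNeg (compl φ) = true := by
  cases φ
  case not φ => simp [isNeg] at h
  all_goals rfl

end Lemmas
section Lemmas2

variable {R : Type} {δ : R → ℕ} {𝒳 : Type} [Fintype 𝒳] [LinearOrder 𝒳]
variable {M : Type} {I : ∀ r : R, Set (Fin (δ r) → M)}

lemma val_foldr_ex_supset (l : List 𝒳) (φ : Fml R δ 𝒳) :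
    val I φ ⊆ val I (l.foldr Fml.ex φ) := by
  induction l with
  | nil => exact le_rfl
  | cons x l ih =>
    intro v hv
    exact ⟨v, ih hv, fun _ _ => rfl⟩

lemma val_exAll_supset (S : Finset 𝒳) (φ : Fml R δ 𝒳) :
    val I φ ⊆ val I (exAll S φ) :=
  val_foldr_ex_supset _ _

lemma val_exAll_univ {S : Finset 𝒳} {φ : Fml R δ 𝒳} (h : val I φ = Set.univ) :
    val I (exAll S φ) = Set.univ :=
  Set.eq_univ_of_univ_subset (h ▸ val_exAll_supset S φ)

lemma FV_foldr_ex (l : List 𝒳) (φ : Fml R δ 𝒳) :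
    FV (l.foldr Fml.ex φ) = FV φ \ l.toFinset := by
  induction l with
  | nil => simp
  | cons x l ih =>
    show FV (Fml.ex x _) = _
    rw [FV, ih]
    ext y
    simp only [Finset.mem_sdiff, List.toFinset_cons, Finset.mem_insert, Finset.mem_singleton,
      List.mem_toFinset]
    constructor
    · rintro ⟨⟨h1, h2⟩, h3⟩
      exact ⟨h1, by

        intro h; rcases h with h | h
        · exact h3 (by simpa using h)
        · exact h2 (by simpa using h)⟩
    · rintro ⟨h1, h2⟩
      push_neg at h2
      exact ⟨⟨h1, by simpa using h2.2⟩, by simpa using h2.1⟩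

lemma FV_exAll (S : Finset 𝒳) (φ : Fml R δ 𝒳) : FV (exAll S φ) = FV φ \ S := by
  rw [exAll, FV_foldr_ex]
  congr 1
  ext x
  simp [Finset.mem_sort]

/-! ### conjList -/

lemma val_foldl_and {base : Fml R δ 𝒳} {l : List (𝒳 × 𝒳)} {v : 𝒳 → M}
    (hb : v ∈ val I base) (h : ∀ p ∈ l, v p.1 = v p.2) :
    v ∈ val I (l.foldl (fun acc q => acc.and (Fml.eql q.1 q.2)) base) := by
  induction l generalizing base with
  | nil => exact hb
  | cons q qs ih =>
    exact ih ⟨hb, h q (by simp)⟩ (fun p hp => h p (by simp [hp]))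

lemma val_conjList_mem {l : List (𝒳 × 𝒳)} {v : 𝒳 → M}
    (h : ∀ p ∈ l, v p.1 = v p.2) : v ∈ val I (conjList l : Fml R δ 𝒳) := by
  match l with
  | [] => trivial
  | p :: ps =>
    exact val_foldl_and (h p (by simp)) (fun q hq => h q (by simp [hq]))

lemma val_conjList_subset {l : List (𝒳 × 𝒳)} {X : Set (𝒳 → M)}
    (h : ∀ p ∈ l, X ⊆ diag p.1 p.2) : X ⊆ val I (conjList l : Fml R δ 𝒳) := by
  intro v hv
  exact val_conjList_mem (fun p hp => h p hp hv)

lemma val_conjList_univ {l : List (𝒳 × 𝒳)} (h : ∀ p ∈ l, p.1 = p.2) :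
    val I (conjList l : Fml R δ 𝒳) = Set.univ :=
  Set.eq_univ_of_forall (fun v => val_conjList_mem (fun p hp => by rw [h p hp]))

lemma FV_foldl_and {base : Fml R δ 𝒳} {l : List (𝒳 × 𝒳)} {F : Finset 𝒳}
    (hb : FV base ⊆ F) (h : ∀ p ∈ l, p.1 ∈ F ∧ p.2 ∈ F) :
    FV (l.foldl (fun acc q => acc.and (Fml.eql q.1 q.2)) base) ⊆ F := by
  induction l generalizing base with
  | nil => exact hb
  | cons q qs ih =>
    refine ih ?_ (fun p hp => h p (by simp [hp]))
    intro y hy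
    rw [FV] at hy
    rcases Finset.mem_union.mp hy with hy | hy
    · exact hb hy
    · rw [FV] at hy
      rcases Finset.mem_insert.mp hy with hy | hy
      · exact hy ▸ (h q (by simp)).1
      · exact (Finset.mem_singleton.mp hy) ▸ (h q (by simp)).2

lemma FV_conjList {l : List (𝒳 × 𝒳)} {F : Finset 𝒳}
    (h : ∀ p ∈ l, p.1 ∈ F ∧ p.2 ∈ F) : FV (conjList l : Fml R δ 𝒳) ⊆ F := by
  match l with
  | [] => simp [conjList, FV]
  | p :: ps =>
    refine FV_foldl_and ?_ (fun q hq => h q (by simp [hq]))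
    intro y hy
    rw [FV] at hy
    rcases Finset.mem_insert.mp hy with hy | hy
    · exact hy ▸ (h p (by simp)).1
    · exact (Finset.mem_singleton.mp hy) ▸ (h p (by simp)).2

end Lemmas2
section Lemmas3
set_option linter.unusedSectionVars false

variable {R : Type} {δ : R → ℕ} {𝒳 : Type}

lemma EqGen_erase_diag (S : Set (𝒳 × 𝒳)) :
    EqGen {p ∈ S | p.1 ≠ p.2} = EqGen S := by
  apply Set.Subset.antisymm
  · rintro ⟨a, b⟩ h
    simp only [EqGen, Set.mem_setOf_eq] at h ⊢
    exact Relation.EqvGen.mono (r := fun a b => (a, b) ∈ S ∧ a ≠ b) (p := fun a b => (a, b) ∈ S)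
        (fun a b (hab : (a, b) ∈ S ∧ a ≠ b) => (hab.1 : (a, b) ∈ S)) _ _ h
  · rintro ⟨a, b⟩ h
    simp only [EqGen, Set.mem_setOf_eq] at h ⊢
    induction h with
    | rel x y hxy =>
      by_cases hd : x = y
      · subst hd; exact Relation.EqvGen.refl x
      · exact Relation.EqvGen.rel _ _ ⟨hxy, hd⟩
    | refl x => exact Relation.EqvGen.refl x
    | symm x y _ ih => exact Relation.EqvGen.symm _ _ ih
    | trans x y z _ _ ih1 ih2 => exact Relation.EqvGen.trans _ _ _ ih1 ih2

variable {rep : Set (𝒳 × 𝒳) → List (𝒳 × 𝒳)}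

lemma rep_mem (hrep : MinRep rep) {E : Set (𝒳 × 𝒳)}
    (hE : Equivalence (fun a b => (a, b) ∈ E)) {p : 𝒳 × 𝒳}
    (hp : p ∈ rep E) : p ∈ E := by
  have h1 := (hrep E hE).1
  have : p ∈ EqGen (pairsOf (rep E)) := mem_EqGen_of_mem hp
  rwa [h1] at this

lemma rep_nondiag (hrep : MinRep rep) {E : Set (𝒳 × 𝒳)}
    (hE : Equivalence (fun a b => (a, b) ∈ E)) {p : 𝒳 × 𝒳}
    (hp : p ∈ rep E) : p.1 ≠ p.2 := by
  intro hd
  have h1 := (hrep E hE).1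
  have h2 := (hrep E hE).2 {q ∈ pairsOf (rep E) | q.1 ≠ q.2}
    (fun q hq => hq.1) (by rw [EqGen_erase_diag]; exact h1)
  have : p ∈ {q ∈ pairsOf (rep E) | q.1 ≠ q.2} := by rw [h2]; exact hp
  exact this.2 hd

lemma EqGen_support {S : Set (𝒳 × 𝒳)} {F : Set 𝒳}
    (h : ∀ p ∈ S, p.1 = p.2 ∨ (p.1 ∈ F ∧ p.2 ∈ F)) :
    ∀ p ∈ EqGen S, p.1 = p.2 ∨ (p.1 ∈ F ∧ p.2 ∈ F) := by
  rintro ⟨a, b⟩ hp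
  simp only [EqGen, Set.mem_setOf_eq] at hp
  induction hp with
  | rel x y hxy => exact h _ hxy
  | refl x => exact Or.inl rfl
  | symm x y _ ih => exact ih.imp Eq.symm And.symm
  | trans x y z _ _ ih1 ih2 =>
    rcases ih1 with h1 | h1
    · rwa [h1]
    · rcases ih2 with h2 | h2
      · rw [← h2]; exact Or.inr h1
      · exact Or.inr ⟨h1.1, h2.2⟩

variable [Fintype 𝒳] [LinearOrder 𝒳]

/-- nontrivial pairs of `eq φ` and `coeq φ` consist of free variables. -/
lemma eqco_support (φ : Fml R δ 𝒳) :
    (∀ p ∈ eqR φ, p.1 = p.2 ∨ (p.1 ∈ (FV φ : Set 𝒳) ∧ p.2 ∈ (FV φ : Set 𝒳))) ∧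
    (∀ p ∈ coeqR φ, p.1 = p.2 ∨ (p.1 ∈ (FV φ : Set 𝒳) ∧ p.2 ∈ (FV φ : Set 𝒳))) := by
  induction φ with
  | one => exact ⟨fun p hp => Or.inl hp, fun p hp => Or.inl hp⟩
  | rel r x => exact ⟨fun p hp => Or.inl hp, fun p hp => Or.inl hp⟩
  | eql x y =>
    constructor
    · refine EqGen_support ?_
      rintro ⟨a, b⟩ hp
      rw [Set.mem_singleton_iff, Prod.ext_iff] at hp
      exact Or.inr ⟨by simp [FV, show a = x from hp.1], by simp [FV, show b = y from hp.2]⟩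
    · exact fun p hp => Or.inl hp
  | not φ ih =>
    refine ⟨fun p hp => ?_, fun p hp => ?_⟩
    · simpa [FV] using ih.2 p hp
    · simpa [FV] using ih.1 p hp
  | and φ ψ ih ih' =>
    constructor
    · refine EqGen_support ?_
      rintro p (hp | hp)
      · refine (ih.1 p hp).imp id (fun h => ⟨?_, ?_⟩) <;> simp [FV] <;> [exact Or.inl h.1; exact Or.inl h.2]
      · refine (ih'.1 p hp).imp id (fun h => ⟨?_, ?_⟩) <;> simp [FV] <;> [exact Or.inr h.1; exact Or.inr h.2]
    · rintro p ⟨hp, _⟩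
      refine (ih.2 p hp).imp id (fun h => ⟨?_, ?_⟩) <;> simp [FV] <;> [exact Or.inl h.1; exact Or.inl h.2]
  | or φ ψ ih ih' =>
    constructor
    · rintro p ⟨hp, _⟩
      refine (ih.1 p hp).imp id (fun h => ⟨?_, ?_⟩) <;> simp [FV] <;> [exact Or.inl h.1; exact Or.inl h.2]
    · refine EqGen_support ?_
      rintro p (hp | hp)
      · refine (ih.2 p hp).imp id (fun h => ⟨?_, ?_⟩) <;> simp [FV] <;> [exact Or.inl h.1; exact Or.inl h.2]
      · refine (ih'.2 p hp).imp id (fun h => ⟨?_, ?_⟩) <;> simp [FV] <;> [exact Or.inr h.1; exact Or.inr h.2]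
  | ex x φ ih =>
    constructor
    · refine EqGen_support ?_
      rintro p ⟨hp, hx1, hx2⟩
      refine (ih.1 p hp).imp id (fun h => ⟨?_, ?_⟩) <;> simp [FV] <;> [exact ⟨h.1, hx1⟩; exact ⟨h.2, hx2⟩]
    · refine EqGen_support ?_
      rintro p ⟨hp, hx1, hx2⟩
      refine (ih.2 p hp).imp id (fun h => ⟨?_, ?_⟩) <;> simp [FV] <;> [exact ⟨h.1, hx1⟩; exact ⟨h.2, hx2⟩]

lemma FV_orStar_subset (φ ψ : Fml R δ 𝒳) : FV (orStar φ ψ) ⊆ FV φ ∪ FV ψ := by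
  rw [orStar, FV, FV_exAll, FV_exAll]
  intro y hy
  rcases Finset.mem_union.mp hy with hy | hy
  · exact Finset.mem_union_left _ (Finset.mem_sdiff.mp hy).1
  · exact Finset.mem_union_right _ (Finset.mem_sdiff.mp hy).1

lemma eqR_and_eq (φ ψ : Fml R δ 𝒳) : eqR (φ.and ψ) = EqGen (eqR φ ∪ eqR ψ) := rfl

/-! ### unfolding lemmas for `genco` -/

lemma gen_one : gen rep (Fml.one : Fml R δ 𝒳) = Fml.one := rfl
lemma cogen_one : cogen rep (Fml.one : Fml R δ 𝒳) = Fml.one := rfl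
lemma gen_rel (r : R) (x : Fin (δ r) → 𝒳) : gen rep (Fml.rel r x) = Fml.rel r x := rfl
lemma cogen_rel (r : R) (x : Fin (δ r) → 𝒳) : cogen rep (Fml.rel r x) = Fml.one := rfl
lemma gen_eql (x y : 𝒳) : gen rep (Fml.eql x y : Fml R δ 𝒳) = Fml.one := rfl
lemma cogen_eql (x y : 𝒳) : cogen rep (Fml.eql x y : Fml R δ 𝒳) = Fml.one := rfl
lemma gen_not (φ : Fml R δ 𝒳) : gen rep (Fml.not φ) = cogen rep φ := rfl
lemma cogen_not (φ : Fml R δ 𝒳) : cogen rep (Fml.not φ) = gen rep φ := rfl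
lemma gen_and (φ ψ : Fml R δ 𝒳) : gen rep (φ.and ψ) =
    ((gen rep φ).and (gen rep ψ)).and
      (conjList (rep (EqGen (eqR (φ.and ψ) \ eqR ((gen rep φ).and (gen rep ψ)))))) := rfl
lemma cogen_and (φ ψ : Fml R δ 𝒳) :
    cogen rep (φ.and ψ) = orStar (cogen rep φ) (cogen rep ψ) := rfl
lemma gen_or (φ ψ : Fml R δ 𝒳) :
    gen rep (φ.or ψ) = orStar (gen rep φ) (gen rep ψ) := rfl
lemma cogen_or (φ ψ : Fml R δ 𝒳) : cogen rep (φ.or ψ) =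
    ((cogen rep φ).and (cogen rep ψ)).and
      (conjList (rep (EqGen (eqR ((Fml.not φ).and (Fml.not ψ)) \
        eqR ((cogen rep φ).and (cogen rep ψ)))))) := rfl
lemma gen_ex (x : 𝒳) (φ : Fml R δ 𝒳) : gen rep (Fml.ex x φ) = Fml.ex x (gen rep φ) := rfl
lemma cogen_ex (x : 𝒳) (φ : Fml R δ 𝒳) : cogen rep (Fml.ex x φ) = Fml.ex x (cogen rep φ) := rfl

/-- the pairs in the `≈∧` part of `gen (φ ∧ ψ)` are nontrivial `eq (φ∧ψ)` pairs;
stated generally. -/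
lemma rep_sdiff_spec (hrep : MinRep rep) (E X : Set (𝒳 × 𝒳))
    (hE : Equivalence (fun a b => (a, b) ∈ E)) {p : 𝒳 × 𝒳}
    (hp : p ∈ rep (EqGen (E \ X))) : p ∈ E ∧ p.1 ≠ p.2 := by
  have hEq : Equivalence (fun a b => (a, b) ∈ EqGen (E \ X)) := equivalence_EqGen _
  have h1 := rep_mem hrep hEq hp
  have h2 := rep_nondiag hrep hEq hp
  exact ⟨EqGen_subset_of_equivalence hE (fun q hq => hq.1) h1, h2⟩

/-- `FV (gen φ) ⊆ FV φ` and `FV (cogen φ) ⊆ FV φ`. -/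
lemma FV_genco (hrep : MinRep rep) (φ : Fml R δ 𝒳) :
    FV (gen rep φ) ⊆ FV φ ∧ FV (cogen rep φ) ⊆ FV φ := by
  induction φ with
  | one => exact ⟨Finset.Subset.refl _, Finset.Subset.refl _⟩
  | rel r x => exact ⟨Finset.Subset.refl _, by rw [cogen_rel]; simp [FV]⟩
  | eql x y => rw [gen_eql, cogen_eql]; constructor <;> simp [FV]
  | not φ ih =>
    rw [gen_not, cogen_not, FV]
    exact ⟨ih.2, ih.1⟩
  | and φ ψ ih ih' =>
    constructor
    · rw [gen_and, FV, FV]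
      refine Finset.union_subset (Finset.union_subset ?_ ?_) ?_
      · exact ih.1.trans (by rw [FV]; exact Finset.subset_union_left)
      · exact ih'.1.trans (by rw [FV]; exact Finset.subset_union_right)
      · refine FV_conjList ?_
        intro p hp
        obtain ⟨hpE, hnd⟩ := rep_sdiff_spec hrep _ _ (eqR_equiv (φ.and ψ)) hp
        rcases (eqco_support (φ.and ψ)).1 p hpE with h | h
        · exact absurd h hnd
        · exact ⟨h.1, h.2⟩
    · rw [cogen_and]
      refine (FV_orStar_subset _ _).trans ?_
      rw [FV]
      exact Finset.union_subset (ih.2.trans Finset.subset_union_left)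
        (ih'.2.trans Finset.subset_union_right)
  | or φ ψ ih ih' =>
    constructor
    · rw [gen_or]
      refine (FV_orStar_subset _ _).trans ?_
      rw [FV]
      exact Finset.union_subset (ih.1.trans Finset.subset_union_left)
        (ih'.1.trans Finset.subset_union_right)
    · rw [cogen_or, FV, FV]
      refine Finset.union_subset (Finset.union_subset ?_ ?_) ?_
      · exact ih.2.trans (by rw [FV]; exact Finset.subset_union_left)
      · exact ih'.2.trans (by rw [FV]; exact Finset.subset_union_right)
      · refine FV_conjList ?_
        intro p hp
        obtain ⟨hpE, hnd⟩ := rep_sdiff_spec hrep _ _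
          (eqR_equiv ((Fml.not φ).and (Fml.not ψ))) hp
        rcases (eqco_support ((Fml.not φ).and (Fml.not ψ))).1 p hpE with h | h
        · exact absurd h hnd
        · have hFV : FV ((Fml.not φ).and (Fml.not ψ)) = FV φ ∪ FV ψ := rfl
          rw [hFV] at h
          rw [FV]
          exact ⟨by exact_mod_cast h.1, by exact_mod_cast h.2⟩
  | ex x φ ih =>
    rw [gen_ex, cogen_ex, FV, FV, FV]
    exact ⟨Finset.sdiff_subset_sdiff ih.1 le_rfl, Finset.sdiff_subset_sdiff ih.2 le_rfl⟩

end Lemmas3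
section Lemmas4
set_option linter.unusedSectionVars false

variable {R : Type} {δ : R → ℕ} {𝒳 : Type} [Fintype 𝒳] [LinearOrder 𝒳]
variable {M : Type} {I : ∀ r : R, Set (Fin (δ r) → M)}
variable {rep : Set (𝒳 × 𝒳) → List (𝒳 × 𝒳)}

lemma val_one : val I (Fml.one : Fml R δ 𝒳) = Set.univ := rfl
lemma val_and (φ ψ : Fml R δ 𝒳) : val I (φ.and ψ) = val I φ ∩ val I ψ := rfl
lemma val_or (φ ψ : Fml R δ 𝒳) : val I (φ.or ψ) = val I φ ∪ val I ψ := rfl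
lemma val_not (φ : Fml R δ 𝒳) : val I (Fml.not φ) = (val I φ)ᶜ := rfl

lemma diag_EqGen {S : Set (𝒳 × 𝒳)} {X : Set (𝒳 → M)}
    (h : ∀ p ∈ S, X ⊆ diag p.1 p.2) : ∀ p ∈ EqGen S, X ⊆ diag p.1 p.2 := by
  rintro ⟨a, b⟩ hp
  simp only [EqGen, Set.mem_setOf_eq] at hp
  induction hp with
  | rel x y hxy => exact h _ hxy
  | refl x => exact fun v _ => rfl
  | symm x y _ ih => exact fun v hv => (ih hv).symm
  | trans x y z _ _ ih1 ih2 => exact fun v hv => (ih1 hv).trans (ih2 hv)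

lemma diag_of_diagonal {a : 𝒳} {X : Set (𝒳 → M)} : X ⊆ diag a a := fun _ _ => rfl

lemma EqGen_subset_id {S : Set (𝒳 × 𝒳)} (h : S ⊆ idRel') : EqGen S ⊆ idRel' :=
  EqGen_subset_of_equivalence equivalence_idRel' h

lemma val_ex_self {x : 𝒳} {φ : Fml R δ 𝒳} : val I φ ⊆ val I (Fml.ex x φ) :=
  fun v hv => ⟨v, hv, fun _ _ => rfl⟩

lemma val_ex_univ {x : 𝒳} {φ : Fml R δ 𝒳} (h : val I φ = Set.univ) :
    val I (Fml.ex x φ) = Set.univ :=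
  Set.eq_univ_of_univ_subset (h ▸ val_ex_self)

lemma val_orStar_left (φ ψ : Fml R δ 𝒳) : val I φ ⊆ val I (orStar φ ψ) :=
  fun v hv => Or.inl (val_exAll_supset _ _ hv)

lemma val_orStar_right (φ ψ : Fml R δ 𝒳) : val I ψ ⊆ val I (orStar φ ψ) :=
  fun v hv => Or.inr (val_exAll_supset _ _ hv)

lemma val_orStar_univ_left {φ ψ : Fml R δ 𝒳} (h : val I φ = Set.univ) :
    val I (orStar φ ψ) = Set.univ :=
  Set.eq_univ_of_univ_subset (h ▸ val_orStar_left φ ψ)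

lemma val_orStar_univ_right {φ ψ : Fml R δ 𝒳} (h : val I ψ = Set.univ) :
    val I (orStar φ ψ) = Set.univ :=
  Set.eq_univ_of_univ_subset (h ▸ val_orStar_right φ ψ)

/-- eq/coeq soundness: pairs in `eq φ` are equal on `‖φ‖`, pairs in `coeq φ` on the complement. -/
lemma eqco_sound (φ : Fml R δ 𝒳) :
    (∀ p ∈ eqR φ, val I φ ⊆ diag p.1 p.2) ∧
    (∀ p ∈ coeqR φ, (val I φ)ᶜ ⊆ diag p.1 p.2) := by
  induction φ with
  | one => exact ⟨fun p hp => hp ▸ diag_of_diagonal, fun p hp => hp ▸ diag_of_diagonal⟩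
  | rel r x => exact ⟨fun p hp => hp ▸ diag_of_diagonal, fun p hp => hp ▸ diag_of_diagonal⟩
  | eql x y =>
    constructor
    · refine diag_EqGen ?_
      rintro ⟨a, b⟩ hp
      rw [Set.mem_singleton_iff, Prod.ext_iff] at hp
      obtain ⟨h1, h2⟩ := hp
      cases h1; cases h2
      exact fun v hv => hv
    · exact fun p hp => hp ▸ diag_of_diagonal
  | not φ ih =>
    refine ⟨fun p hp => ?_, fun p hp => ?_⟩
    · exact ih.2 p hp
    · rw [val_not, compl_compl]; exact ih.1 p hp
  | and φ ψ ih ih' =>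
    constructor
    · refine diag_EqGen ?_
      rintro p (hp | hp)
      · exact (Set.inter_subset_left).trans (ih.1 p hp)
      · exact (Set.inter_subset_right).trans (ih'.1 p hp)
    · rintro p ⟨hp, hp'⟩
      rw [val_and, Set.compl_inter]
      exact Set.union_subset (ih.2 p hp) (ih'.2 p hp')
  | or φ ψ ih ih' =>
    constructor
    · rintro p ⟨hp, hp'⟩
      rw [val_or]
      exact Set.union_subset (ih.1 p hp) (ih'.1 p hp')
    · refine diag_EqGen ?_
      rintro p (hp | hp)
      · rw [val_or, Set.compl_union]
        exact (Set.inter_subset_left).trans (ih.2 p hp)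
      · rw [val_or, Set.compl_union]
        exact (Set.inter_subset_right).trans (ih'.2 p hp)
  | ex x φ ih =>
    constructor
    · refine diag_EqGen ?_
      rintro ⟨a, b⟩ ⟨hp, hxa, hxb⟩
      rintro v ⟨u, hu, hagree⟩
      have := ih.1 _ hp hu
      simp only [diag, Set.mem_setOf_eq] at this ⊢
      rw [← hagree a hxa, ← hagree b hxb]
      exact this
    · refine diag_EqGen ?_
      rintro ⟨a, b⟩ ⟨hp, hxa, hxb⟩
      intro v hv
      have hvφ : v ∉ val I φ := fun h => hv (val_ex_self h)
      exact ih.2 _ hp hvφ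

/-- gen/cogen soundness. -/
lemma genco_sound (hrep : MinRep rep) (φ : Fml R δ 𝒳) :
    val I φ ⊆ val I (gen rep φ) ∧ (val I φ)ᶜ ⊆ val I (cogen rep φ) := by
  induction φ with
  | one => exact ⟨le_rfl, by rw [cogen_one]; exact fun v _ => trivial⟩
  | rel r x => exact ⟨le_rfl, by rw [cogen_rel]; exact fun v _ => trivial⟩
  | eql x y => exact ⟨fun v _ => trivial, fun v _ => trivial⟩
  | not φ ih =>
    rw [gen_not, cogen_not, val_not, compl_compl]
    exact ⟨ih.2, ih.1⟩
  | and φ ψ ih ih' =>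
    constructor
    · rw [gen_and, val_and, val_and]
      rintro v hv
      refine ⟨⟨ih.1 hv.1, ih'.1 hv.2⟩, ?_⟩
      refine val_conjList_subset (fun p hp => ?_) hv
      obtain ⟨hpE, _⟩ := rep_sdiff_spec hrep _ _ (eqR_equiv (φ.and ψ)) hp
      exact (eqco_sound (φ.and ψ)).1 p hpE
    · rw [cogen_and, val_and, Set.compl_inter]
      exact Set.union_subset (ih.2.trans (val_orStar_left _ _))
        (ih'.2.trans (val_orStar_right _ _))
  | or φ ψ ih ih' =>
    constructor
    · rw [gen_or, val_or]
      exact Set.union_subset (ih.1.trans (val_orStar_left _ _))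
        (ih'.1.trans (val_orStar_right _ _))
    · rw [cogen_or, val_and, val_and, val_or, Set.compl_union]
      rintro v hv
      refine ⟨⟨ih.2 hv.1, ih'.2 hv.2⟩, ?_⟩
      refine val_conjList_subset (fun p hp => ?_) hv
      obtain ⟨hpE, _⟩ := rep_sdiff_spec hrep _ _ (eqR_equiv ((Fml.not φ).and (Fml.not ψ))) hp
      have := (eqco_sound (I := I) ((Fml.not φ).and (Fml.not ψ))).1 p hpE
      rwa [val_and, val_not, val_not] at this
  | ex x φ ih =>
    constructor
    · rw [gen_ex]
      rintro v ⟨u, hu, hagree⟩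
      exact ⟨u, ih.1 hu, hagree⟩
    · rw [cogen_ex]
      intro v hv
      have hvφ : v ∉ val I φ := fun h => hv (val_ex_self h)
      exact ⟨v, ih.2 hvφ, fun _ _ => rfl⟩

end Lemmas4

/-- The "negated" polarity of a formula: `norm φ ψ` is a negated formula iff `negb φ`. -/
def negb {R : Type} {δ : R → ℕ} {𝒳 : Type} : Fml R δ 𝒳 → Bool
  | .one => false
  | .rel _ _ => false
  | .eql _ _ => false
  | .not φ => !negb φ
  | .and φ ψ => negb φ && negb ψ
  | .or φ ψ => negb φ || negb ψ
  | .ex _ _ => false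

section Lemmas5
set_option linter.unusedSectionVars false

variable {R : Type} {δ : R → ℕ} {𝒳 : Type} [Fintype 𝒳] [LinearOrder 𝒳]
variable {M : Type} {I : ∀ r : R, Set (Fin (δ r) → M)}
variable {rep : Set (𝒳 × 𝒳) → List (𝒳 × 𝒳)}

lemma clE_empty (E : Set (𝒳 × 𝒳)) : clE E ∅ = ∅ := by
  ext y; simp [clE]

lemma gen0_not (φ : Fml R δ 𝒳) : gen0 (Fml.not φ) = cogen0 φ := rfl
lemma cogen0_not (φ : Fml R δ 𝒳) : cogen0 (Fml.not φ) = gen0 φ := rfl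
lemma gen0_and (φ ψ : Fml R δ 𝒳) :
    gen0 (φ.and ψ) = clE (eqR (φ.and ψ)) (gen0 φ ∪ gen0 ψ) := rfl
lemma cogen0_and (φ ψ : Fml R δ 𝒳) : cogen0 (φ.and ψ) = cogen0 φ ∩ cogen0 ψ := rfl
lemma gen0_or (φ ψ : Fml R δ 𝒳) : gen0 (φ.or ψ) = gen0 φ ∩ gen0 ψ := rfl
lemma cogen0_or (φ ψ : Fml R δ 𝒳) :
    cogen0 (φ.or ψ) = clE (EqGen (coeqR φ ∪ coeqR ψ)) (cogen0 φ ∪ cogen0 ψ) := rfl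
lemma gen0_ex (x : 𝒳) (φ : Fml R δ 𝒳) : gen0 (Fml.ex x φ) = gen0 φ \ {x} := rfl
lemma cogen0_ex (x : 𝒳) (φ : Fml R δ 𝒳) : cogen0 (Fml.ex x φ) = cogen0 φ \ {x} := rfl

/-- Lemma Z: under `ExOK`, negated formulas have empty `gen₀`,
non-negated ones empty `cogen₀`. -/
lemma gen0_polarity (φ : Fml R δ 𝒳) (hok : ExOK φ) :
    (negb φ = true → gen0 φ = ∅) ∧ (negb φ = false → cogen0 φ = ∅) := by
  induction φ with
  | one => exact ⟨fun h => by simp [negb] at h, fun _ => rfl⟩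
  | rel r x => exact ⟨fun h => by simp [negb] at h, fun _ => rfl⟩
  | eql x y => exact ⟨fun h => by simp [negb] at h, fun _ => rfl⟩
  | not φ ih =>
    obtain ⟨ih1, ih2⟩ := ih hok
    constructor
    · intro h
      rw [negb] at h; simp only [Bool.not_eq_true'] at h
      rw [gen0_not]; exact ih2 h
    · intro h
      rw [negb] at h; simp only [Bool.not_eq_false'] at h
      rw [cogen0_not]; exact ih1 h
  | and φ ψ ih ih' =>
    obtain ⟨hok1, hok2⟩ := hok
    constructor
    · intro h
      rw [negb, Bool.and_eq_true] at h
      rw [gen0_and, (ih hok1).1 h.1, (ih' hok2).1 h.2]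
      simp [clE_empty]
    · intro h
      rw [negb, Bool.and_eq_false_iff] at h
      rw [cogen0_and]
      rcases h with h | h
      · rw [(ih hok1).2 h]; exact Set.empty_inter _
      · rw [(ih' hok2).2 h]; exact Set.inter_empty _
  | or φ ψ ih ih' =>
    obtain ⟨hok1, hok2⟩ := hok
    constructor
    · intro h
      rw [negb, Bool.or_eq_true] at h
      rw [gen0_or]
      rcases h with h | h
      · rw [(ih hok1).1 h]; exact Set.empty_inter _
      · rw [(ih' hok2).1 h]; exact Set.inter_empty _
    · intro h
      rw [negb, Bool.or_eq_false_iff] at h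
      rw [cogen0_or, (ih hok1).2 h.1, (ih' hok2).2 h.2]
      simp [clE_empty]
  | ex x φ ih =>
    obtain ⟨hx, hok1⟩ := hok
    refine ⟨fun h => by simp [negb] at h, fun _ => ?_⟩
    rw [cogen0_ex]
    have hneg : negb φ = false := by
      cases hn : negb φ
      · rfl
      · rw [(ih hok1).1 hn] at hx; exact absurd hx (Set.notMem_empty x)
    rw [(ih hok1).2 hneg]
    exact Set.empty_diff _

/-- Lemmas P and Q: under `ExOK`, if `negb φ` then `gen φ` is valid and `eq φ` trivial;
otherwise `cogen φ` is valid and `coeq φ` trivial. -/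
lemma genco_polarity (hrep : MinRep rep) (φ : Fml R δ 𝒳) (hok : ExOK φ) :
    (negb φ = true → val I (gen rep φ) = Set.univ ∧ eqR φ ⊆ idRel') ∧
    (negb φ = false → val I (cogen rep φ) = Set.univ ∧ coeqR φ ⊆ idRel') := by
  induction φ with
  | one => exact ⟨fun h => by simp [negb] at h, fun _ => ⟨rfl, le_rfl⟩⟩
  | rel r x => exact ⟨fun h => by simp [negb] at h, fun _ => ⟨rfl, le_rfl⟩⟩
  | eql x y => exact ⟨fun h => by simp [negb] at h, fun _ => ⟨rfl, le_rfl⟩⟩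
  | not φ ih =>
    obtain ⟨ih1, ih2⟩ := ih hok
    constructor
    · intro h
      rw [negb] at h; simp only [Bool.not_eq_true'] at h
      rw [gen_not]; exact ih2 h
    · intro h
      rw [negb] at h; simp only [Bool.not_eq_false'] at h
      rw [cogen_not]; exact ih1 h
  | and φ ψ ih ih' =>
    obtain ⟨hok1, hok2⟩ := hok
    constructor
    · intro h
      rw [negb, Bool.and_eq_true] at h
      obtain ⟨hg1, he1⟩ := (ih hok1).1 h.1
      obtain ⟨hg2, he2⟩ := (ih' hok2).1 h.2
      have heq : eqR (φ.and ψ) ⊆ idRel' :=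
        EqGen_subset_id (Set.union_subset he1 he2)
      refine ⟨?_, heq⟩
      have hconj : val I (conjList (rep (EqGen (eqR (φ.and ψ) \
          eqR ((gen rep φ).and (gen rep ψ)))))) = Set.univ := by
        refine val_conjList_univ ?_
        intro p hp
        obtain ⟨hpE, _⟩ := rep_sdiff_spec hrep _ _ (eqR_equiv (φ.and ψ)) hp
        exact heq hpE
      rw [gen_and, val_and, val_and, hg1, hg2, hconj]
      simp
    · intro h
      rw [negb, Bool.and_eq_false_iff] at h
      rw [cogen_and]
      have hco : coeqR (φ.and ψ) ⊆ idRel' := by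
        rcases h with h | h
        · exact (Set.inter_subset_left).trans ((ih hok1).2 h).2
        · exact (Set.inter_subset_right).trans ((ih' hok2).2 h).2
      refine ⟨?_, hco⟩
      rcases h with h | h
      · exact val_orStar_univ_left ((ih hok1).2 h).1
      · exact val_orStar_univ_right ((ih' hok2).2 h).1
  | or φ ψ ih ih' =>
    obtain ⟨hok1, hok2⟩ := hok
    constructor
    · intro h
      rw [negb, Bool.or_eq_true] at h
      rw [gen_or]
      have heq : eqR (φ.or ψ) ⊆ idRel' := by
        rcases h with h | h
        · exact (Set.inter_subset_left).trans ((ih hok1).1 h).2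
        · exact (Set.inter_subset_right).trans ((ih' hok2).1 h).2
      refine ⟨?_, heq⟩
      rcases h with h | h
      · exact val_orStar_univ_left ((ih hok1).1 h).1
      · exact val_orStar_univ_right ((ih' hok2).1 h).1
    · intro h
      rw [negb, Bool.or_eq_false_iff] at h
      obtain ⟨hg1, he1⟩ := (ih hok1).2 h.1
      obtain ⟨hg2, he2⟩ := (ih' hok2).2 h.2
      have hco : coeqR (φ.or ψ) ⊆ idRel' :=
        EqGen_subset_id (Set.union_subset he1 he2)
      refine ⟨?_, hco⟩
      have hconj : val I (conjList (rep (EqGen (eqR ((Fml.not φ).and (Fml.not ψ)) \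
          eqR ((cogen rep φ).and (cogen rep ψ)))))) = Set.univ := by
        refine val_conjList_univ ?_
        intro p hp
        obtain ⟨hpE, _⟩ := rep_sdiff_spec hrep _ _
          (eqR_equiv ((Fml.not φ).and (Fml.not ψ))) hp
        have : eqR ((Fml.not φ).and (Fml.not ψ)) ⊆ idRel' :=
          EqGen_subset_id (Set.union_subset he1 he2)
        exact this hpE
      rw [cogen_or, val_and, val_and, hg1, hg2, hconj]
      simp
  | ex x φ ih =>
    obtain ⟨hx, hok1⟩ := hok
    refine ⟨fun h => by simp [negb] at h, fun _ => ?_⟩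
    have hneg : negb φ = false := by
      cases hn : negb φ
      · rfl
      · rw [((gen0_polarity φ hok1).1 hn)] at hx; exact absurd hx (Set.notMem_empty x)
    obtain ⟨hg, hc⟩ := (ih hok1).2 hneg
    constructor
    · rw [cogen_ex]; exact val_ex_univ hg
    · refine EqGen_subset_id ?_
      exact (Set.inter_subset_left).trans hc

end Lemmas5
section Lemmas6
set_option linter.unusedSectionVars false

variable {R : Type} {δ : R → ℕ} {𝒳 : Type} [Fintype 𝒳] [LinearOrder 𝒳]
variable {M : Type} {I : ∀ r : R, Set (Fin (δ r) → M)}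

lemma val_subst {χ : Fml R δ 𝒳} {u w : 𝒳} (huw : u ≠ w) :
    val I (subst χ u w) = {v | Function.update v u (v w) ∈ val I χ} := by
  ext v
  constructor
  · rintro ⟨t, ⟨htχ, hteq⟩, hagree⟩
    have ht : t = Function.update v u (v w) := by
      funext y
      by_cases hy : y = u
      · subst hy
        rw [Function.update_self]
        have hw : t w = v w := hagree w (Ne.symm huw)
        simp only [val, Set.mem_setOf_eq] at hteq
        rw [hteq, hw]
      · rw [Function.update_of_ne hy, hagree y hy]
    show Function.update v u (v w) ∈ val I χ
    rwa [ht] at htχ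
  · intro hv
    refine ⟨Function.update v u (v w), ⟨hv, ?_⟩, fun y hy => Function.update_of_ne hy _ _⟩
    show Function.update v u (v w) u = Function.update v u (v w) w
    rw [Function.update_self, Function.update_of_ne (Ne.symm huw)]

/-- Iterated update function corresponding to `substFold`. -/
def updL : List (𝒳 × 𝒳) → (𝒳 → M) → (𝒳 → M)
  | [], v => v
  | p :: l, v => Function.update (updL l v) p.1 (updL l v p.2)

lemma val_substFold {l : List (𝒳 × 𝒳)} (h : ∀ p ∈ l, p.1 ≠ p.2) (χ : Fml R δ 𝒳) :
    val I (substFold χ l) = {v | updL l v ∈ val I χ} := by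
  induction l generalizing χ with
  | nil => ext v; simp [substFold, updL]
  | cons p l ih =>
    show val I (substFold (subst χ p.1 p.2) l) = _
    rw [ih (fun q hq => h q (by simp [hq])) (subst χ p.1 p.2)]
    ext v
    simp only [Set.mem_setOf_eq, val_subst (h p (by simp))]
    rfl

lemma updL_append (a b : List (𝒳 × 𝒳)) (v : 𝒳 → M) :
    updL (a ++ b) v = updL a (updL b v) := by
  induction a with
  | nil => rfl
  | cons p a ih => simp [updL, ih]

lemma updL_ofFn_notmem {n : ℕ} (g : Fin n → 𝒳 × 𝒳) (v : 𝒳 → M) {y : 𝒳}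
    (hy : ∀ i, y ≠ (g i).1) : updL (List.ofFn g) v y = v y := by
  induction n with
  | zero => rfl
  | succ n ih =>
    rw [List.ofFn_succ]
    show Function.update (updL (List.ofFn fun i => g i.succ) v) (g 0).1
      (updL (List.ofFn fun i => g i.succ) v (g 0).2) y = v y
    rw [Function.update_of_ne (hy 0)]
    exact ih (fun i => (g i.succ)) (fun i => hy i.succ)

lemma updL_ofFn_target {n : ℕ} (g : Fin n → 𝒳 × 𝒳) (v : 𝒳 → M)
    (hinj : ∀ i j, (g i).1 = (g j).1 → i = j)
    (hst : ∀ i j, (g i).2 ≠ (g j).1) (i : Fin n) :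
    updL (List.ofFn g) v (g i).1 = v (g i).2 := by
  induction n with
  | zero => exact absurd i.2 (by simp)
  | succ n ih =>
    rw [List.ofFn_succ]
    show Function.update (updL (List.ofFn fun k => g k.succ) v) (g 0).1
      (updL (List.ofFn fun k => g k.succ) v (g 0).2) (g i).1 = v (g i).2
    rcases Fin.eq_zero_or_eq_succ i with hi | ⟨j, hj⟩
    · subst hi
      rw [Function.update_self]
      exact updL_ofFn_notmem _ v (fun k => hst 0 k.succ)
    · subst hj
      have hne : (g j.succ).1 ≠ (g 0).1 := fun he => by
        have := hinj _ _ he; exact absurd this (by simp [Fin.ext_iff])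
      rw [Function.update_of_ne hne]
      exact ih (fun k => g k.succ) (fun k l he => by
          have := hinj k.succ l.succ he
          exact Fin.succ_injective _ this)
        (fun k l => hst k.succ l.succ) j

lemma val_canonAtom (Y : ∀ r : R, Fin (δ r) → 𝒳) (Z : ∀ r : R, (Fin (δ r) → 𝒳) → Fin (δ r) → 𝒳)
    (hY : ∀ r, Function.Injective (Y r)) (hZ : GoodZ Y Z) (r : R) (x : Fin (δ r) → 𝒳) :
    val I (canonAtom Y Z r x) = val I (Fml.rel r x) := by
  obtain ⟨hZinj, hZY, hZx⟩ := hZ r x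
  rw [canonAtom, val_substFold]
  · ext v
    simp only [Set.mem_setOf_eq]
    rw [updL_append]
    have h1 : ∀ i, updL (List.ofFn fun i => (Z r x i, x i)) v (Z r x i) = v (x i) := by
      intro i
      exact updL_ofFn_target (fun i => (Z r x i, x i)) v
        (fun i j he => hZinj he) (fun i j => fun he => hZx j i he.symm) i
    have h2 : ∀ i, updL (List.ofFn fun i => (Y r i, Z r x i))
        (updL (List.ofFn fun i => (Z r x i, x i)) v) (Y r i) =
        updL (List.ofFn fun i => (Z r x i, x i)) v (Z r x i) := by
      intro i
      exact updL_ofFn_target (fun i => (Y r i, Z r x i)) _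
        (fun i j he => hY r he) (fun i j => hZY i j) i
    show (fun i => updL _ _ (Y r i)) ∈ I r ↔ (fun i => v (x i)) ∈ I r
    have : (fun i => updL (List.ofFn fun i => (Y r i, Z r x i))
        (updL (List.ofFn fun i => (Z r x i, x i)) v) (Y r i)) = fun i => v (x i) := by
      funext i
      rw [h2 i, h1 i]
    rw [this]
  · intro p hp
    rw [List.mem_append] at hp
    rcases hp with hp | hp <;> rw [List.mem_ofFn] at hp <;> obtain ⟨i, hi⟩ := hp
    · rw [← hi]; exact fun he => hZY i i he.symm
    · rw [← hi]; exact fun he => hZx i i he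

lemma isNeg_subst (χ : Fml R δ 𝒳) (u w : 𝒳) : isNeg (subst χ u w) = false := rfl

lemma isNeg_substFold {χ : Fml R δ 𝒳} (h : isNeg χ = false) (l : List (𝒳 × 𝒳)) :
    isNeg (substFold χ l) = false := by
  induction l generalizing χ with
  | nil => exact h
  | cons p l ih => exact ih (isNeg_subst χ p.1 p.2)

lemma isNeg_canonAtom (Y : ∀ r : R, Fin (δ r) → 𝒳)
    (Z : ∀ r : R, (Fin (δ r) → 𝒳) → Fin (δ r) → 𝒳) (r : R) (x : Fin (δ r) → 𝒳) :
    isNeg (canonAtom Y Z r x) = false :=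
  isNeg_substFold (by rfl) _

end Lemmas6
/-- a normalized formula is not a double negation. -/
def goodShape {R : Type} {δ : R → ℕ} {𝒳 : Type} (α : Fml R δ 𝒳) : Prop :=
  ∀ c, α = Fml.not c → isNeg c = false

section Lemmas7
set_option linter.unusedSectionVars false

variable {R : Type} {δ : R → ℕ} {𝒳 : Type} [Fintype 𝒳] [LinearOrder 𝒳]
variable {M : Type} {I : ∀ r : R, Set (Fin (δ r) → M)}

lemma goodShape_of_isNeg_false {α : Fml R δ 𝒳} (h : isNeg α = false) : goodShape α := by
  intro c hc
  subst hc
  simp [isNeg] at h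

lemma isNeg_compl_eq {α : Fml R δ 𝒳} (hg : goodShape α) :
    isNeg (compl α) = !isNeg α := by
  cases α
  case not c =>
    show isNeg c = !isNeg (Fml.not c)
    have h1 : isNeg (Fml.not c : Fml R δ 𝒳) = true := rfl
    rw [h1]
    simpa using hg c rfl
  all_goals rfl

lemma goodShape_compl {α : Fml R δ 𝒳} (hg : goodShape α) : goodShape (compl α) := by
  cases α
  case not c =>
    have hc := hg c rfl
    show goodShape c
    intro d hd
    subst hd
    simp [isNeg] at hc
  all_goals exact fun d hd => by cases hd; rfl

lemma compl_compl_of_isNeg {α : Fml R δ 𝒳} (hg : goodShape α) (h : isNeg α = true) :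
    ∃ c, α = Fml.not c ∧ isNeg c = false := by
  cases α
  case not c => exact ⟨c, rfl, hg c rfl⟩
  all_goals simp [isNeg] at h

/-- set helper: equality of intersections transfers to complements. -/
lemma compl_inter_eq_of_inter_eq {X Y P : Set (𝒳 → M)} (h : X ∩ P = Y ∩ P) :
    Xᶜ ∩ P = Yᶜ ∩ P := by
  ext v
  constructor
  · rintro ⟨hx, hp⟩
    refine ⟨fun hy => hx ?_, hp⟩
    have : v ∈ Y ∩ P := ⟨hy, hp⟩
    rw [← h] at this
    exact this.1
  · rintro ⟨hy, hp⟩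
    refine ⟨fun hx => hy ?_, hp⟩
    have : v ∈ X ∩ P := ⟨hx, hp⟩
    rw [h] at this
    exact this.1

lemma val_align_subset (χ ψ : Fml R δ 𝒳) : val I (align χ ψ) ⊆ val I χ := by
  rw [align]
  split
  · exact le_rfl
  · exact Set.inter_subset_left

lemma val_align_inter (χ ψ : Fml R δ 𝒳) :
    val I (align χ ψ) ∩ val I ψ = val I χ ∩ val I ψ := by
  rw [align]
  split
  · rfl
  · rw [val_and]
    ext v
    constructor
    · rintro ⟨⟨h1, _⟩, h2⟩
      exact ⟨h1, h2⟩
    · rintro ⟨h1, h2⟩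
      exact ⟨⟨h1, val_exAll_supset _ _ h2⟩, h2⟩

lemma val_align_compl_inter (χ ψ : Fml R δ 𝒳) :
    (val I (align χ ψ))ᶜ ∩ val I ψ = (val I χ)ᶜ ∩ val I ψ :=
  compl_inter_eq_of_inter_eq (val_align_inter χ ψ)

lemma normAnd_eq_ff_ff {a₁ a₂ ψ : Fml R δ 𝒳} (h1 : isNeg a₁ = false) (h2 : isNeg a₂ = false) :
    normAnd a₁ a₂ ψ = a₁.and a₂ := by
  simp [normAnd, h1, h2]

lemma normAnd_eq_ff_tt {a₁ a₂ ψ : Fml R δ 𝒳} (h1 : isNeg a₁ = false) (h2 : isNeg a₂ = true) :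
    normAnd a₁ a₂ ψ = (align a₁ ψ).and (Fml.not (align (compl a₂) ψ)) := by
  simp [normAnd, h1, h2]

lemma normAnd_eq_tt_ff {a₁ a₂ ψ : Fml R δ 𝒳} (h1 : isNeg a₁ = true) (h2 : isNeg a₂ = false) :
    normAnd a₁ a₂ ψ = (align a₂ ψ).and (Fml.not (align (compl a₁) ψ)) := by
  simp [normAnd, h1, h2]

lemma normAnd_eq_tt_tt {a₁ a₂ ψ : Fml R δ 𝒳} (h1 : isNeg a₁ = true) (h2 : isNeg a₂ = true) :
    normAnd a₁ a₂ ψ = Fml.not ((align (compl a₁) ψ).or (align (compl a₂) ψ)) := by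
  simp [normAnd, h1, h2]

lemma isNeg_normAnd {a₁ a₂ ψ : Fml R δ 𝒳} :
    isNeg (normAnd a₁ a₂ ψ) = (isNeg a₁ && isNeg a₂) := by
  cases h1 : isNeg a₁ <;> cases h2 : isNeg a₂
  · rw [normAnd_eq_ff_ff h1 h2]; rfl
  · rw [normAnd_eq_ff_tt h1 h2]; rfl
  · rw [normAnd_eq_tt_ff h1 h2]; rfl
  · rw [normAnd_eq_tt_tt h1 h2]; rfl

lemma goodShape_normAnd {a₁ a₂ ψ : Fml R δ 𝒳} : goodShape (normAnd a₁ a₂ ψ) := by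
  cases h1 : isNeg a₁ <;> cases h2 : isNeg a₂
  · rw [normAnd_eq_ff_ff h1 h2]; exact goodShape_of_isNeg_false rfl
  · rw [normAnd_eq_ff_tt h1 h2]; exact goodShape_of_isNeg_false rfl
  · rw [normAnd_eq_tt_ff h1 h2]; exact goodShape_of_isNeg_false rfl
  · rw [normAnd_eq_tt_tt h1 h2]
    intro c hc
    cases hc
    rfl

lemma mem_align_iff {χ ψ : Fml R δ 𝒳} {v : 𝒳 → M} (hv : v ∈ val I ψ) :
    v ∈ val I (align χ ψ) ↔ v ∈ val I χ := by
  have h := Set.ext_iff.mp (val_align_inter (I := I) χ ψ) v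
  exact ⟨fun h1 => ((h.mp ⟨h1, hv⟩)).1, fun h1 => (h.mpr ⟨h1, hv⟩).1⟩

lemma mem_compl_iff' {χ : Fml R δ 𝒳} {v : 𝒳 → M} :
    v ∈ val I (compl χ) ↔ v ∉ val I χ := by
  rw [val_compl]; rfl

lemma val_normAnd_inter (a₁ a₂ ψ : Fml R δ 𝒳) :
    val I (normAnd a₁ a₂ ψ) ∩ val I ψ = val I a₁ ∩ val I a₂ ∩ val I ψ := by
  ext v
  simp only [Set.mem_inter_iff]
  constructor
  · rintro ⟨hN, hψ⟩
    refine ⟨⟨?_, ?_⟩, hψ⟩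
    · cases h1 : isNeg a₁ <;> cases h2 : isNeg a₂
      · rw [normAnd_eq_ff_ff h1 h2] at hN; exact hN.1
      · rw [normAnd_eq_ff_tt h1 h2] at hN
        exact (mem_align_iff hψ).mp hN.1
      · rw [normAnd_eq_tt_ff h1 h2] at hN
        have : v ∉ val I (align (compl a₁) ψ) := hN.2
        have h3 : v ∉ val I (compl a₁) := fun hc => this ((mem_align_iff hψ).mpr hc)
        rw [mem_compl_iff'] at h3
        exact Classical.not_not.mp h3
      · rw [normAnd_eq_tt_tt h1 h2] at hN
        have : v ∉ val I (align (compl a₁) ψ) := fun hc => hN (Or.inl hc)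
        have h3 : v ∉ val I (compl a₁) := fun hc => this ((mem_align_iff hψ).mpr hc)
        rw [mem_compl_iff'] at h3
        exact Classical.not_not.mp h3
    · cases h1 : isNeg a₁ <;> cases h2 : isNeg a₂
      · rw [normAnd_eq_ff_ff h1 h2] at hN; exact hN.2
      · rw [normAnd_eq_ff_tt h1 h2] at hN
        have : v ∉ val I (align (compl a₂) ψ) := hN.2
        have h3 : v ∉ val I (compl a₂) := fun hc => this ((mem_align_iff hψ).mpr hc)
        rw [mem_compl_iff'] at h3
        exact Classical.not_not.mp h3
      · rw [normAnd_eq_tt_ff h1 h2] at hN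
        exact (mem_align_iff hψ).mp hN.1
      · rw [normAnd_eq_tt_tt h1 h2] at hN
        have : v ∉ val I (align (compl a₂) ψ) := fun hc => hN (Or.inr hc)
        have h3 : v ∉ val I (compl a₂) := fun hc => this ((mem_align_iff hψ).mpr hc)
        rw [mem_compl_iff'] at h3
        exact Classical.not_not.mp h3
  · rintro ⟨⟨h1v, h2v⟩, hψ⟩
    refine ⟨?_, hψ⟩
    cases h1 : isNeg a₁ <;> cases h2 : isNeg a₂
    · rw [normAnd_eq_ff_ff h1 h2]; exact ⟨h1v, h2v⟩
    · rw [normAnd_eq_ff_tt h1 h2]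
      refine ⟨(mem_align_iff hψ).mpr h1v, fun hc => ?_⟩
      have := (mem_align_iff hψ).mp hc
      rw [mem_compl_iff'] at this
      exact this h2v
    · rw [normAnd_eq_tt_ff h1 h2]
      refine ⟨(mem_align_iff hψ).mpr h2v, fun hc => ?_⟩
      have := (mem_align_iff hψ).mp hc
      rw [mem_compl_iff'] at this
      exact this h1v
    · rw [normAnd_eq_tt_tt h1 h2]
      rintro (hc | hc)
      · have := (mem_align_iff hψ).mp hc
        rw [mem_compl_iff'] at this
        exact this h1v
      · have := (mem_align_iff hψ).mp hc
        rw [mem_compl_iff'] at this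
        exact this h2v

end Lemmas7
section Main
set_option linter.unusedSectionVars false
set_option maxHeartbeats 1000000

variable {R : Type} {δ : R → ℕ} {𝒳 : Type} [Fintype 𝒳] [LinearOrder 𝒳]
variable {M : Type} {I : ∀ r : R, Set (Fin (δ r) → M)}
variable {rep : Set (𝒳 × 𝒳) → List (𝒳 × 𝒳)}
variable {Y : ∀ r : R, Fin (δ r) → 𝒳} {Z : ∀ r : R, (Fin (δ r) → 𝒳) → Fin (δ r) → 𝒳}

lemma norm_not' (φ₁ ψ : Fml R δ 𝒳) :
    norm rep Y Z (Fml.not φ₁) ψ = compl (norm rep Y Z φ₁ ψ) := rfl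

lemma norm_and' (φ₁ φ₂ ψ : Fml R δ 𝒳) :
    norm rep Y Z (φ₁.and φ₂) ψ =
      normAnd (norm rep Y Z φ₁ (exAll (FV ψ \ FV φ₁) ψ))
        (norm rep Y Z φ₂ (exAll (FV ψ \ FV φ₂) ψ)) ψ := rfl

lemma norm_or' (φ₁ φ₂ ψ : Fml R δ 𝒳) :
    norm rep Y Z (φ₁.or φ₂) ψ =
      compl (normAnd (compl (norm rep Y Z φ₁ (exAll (FV ψ \ FV φ₁) ψ)))
        (compl (norm rep Y Z φ₂ (exAll (FV ψ \ FV φ₂) ψ))) ψ) := rfl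

lemma norm_ex' (x : 𝒳) (φ₁ ψ : Fml R δ 𝒳) :
    norm rep Y Z (Fml.ex x φ₁) ψ =
      Fml.ex x (norm rep Y Z φ₁
        ((exAll (FV (gen rep φ₁) \ {x}) (gen rep φ₁)).and ψ)) := rfl

lemma compl_eq_not_of_not_isNeg {χ : Fml R δ 𝒳} (h : isNeg χ = false) :
    compl χ = Fml.not χ := by
  cases χ
  case not c => simp [isNeg] at h
  all_goals rfl

lemma compl_compl_of_goodShape {α : Fml R δ 𝒳} (hg : goodShape α) :
    compl (compl α) = α := by
  cases h : isNeg α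
  · exact compl_compl_of_not_isNeg h
  · obtain ⟨c, rfl, hc⟩ := compl_compl_of_isNeg hg h
    show compl c = Fml.not c
    exact compl_eq_not_of_not_isNeg hc

/-- The main invariant of the normalization, proven by induction on `φ`. -/
theorem norm_main (hrep : MinRep rep) (hY : ∀ r, Function.Injective (Y r))
    (hZ : GoodZ Y Z) (φ : Fml R δ 𝒳) : ∀ ψ : Fml R δ 𝒳,
    (isNeg (norm rep Y Z φ ψ) = negb φ ∧ goodShape (norm rep Y Z φ ψ)) ∧
    (ExOK φ →
      (∀ p ∈ eqR φ, val I (norm rep Y Z φ ψ) ⊆ diag p.1 p.2) ∧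
      (∀ p ∈ coeqR φ, (val I (norm rep Y Z φ ψ))ᶜ ⊆ diag p.1 p.2) ∧
      val I (norm rep Y Z φ ψ) ⊆ val I (gen rep φ) ∧
      (val I (norm rep Y Z φ ψ))ᶜ ⊆ val I (cogen rep φ) ∧
      (↑(FV ψ) ⊆ (↑(FV φ) : Set 𝒳) →
        val I (norm rep Y Z φ ψ) ∩ val I ψ = val I φ ∩ val I ψ)) := by
  induction φ with
  | one =>
    intro ψ
    refine ⟨⟨rfl, goodShape_of_isNeg_false rfl⟩, fun _ => ?_⟩
    refine ⟨fun p hp => hp ▸ diag_of_diagonal, fun p hp => hp ▸ diag_of_diagonal,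
      le_rfl, ?_, fun _ => rfl⟩
    show (val I (Fml.one : Fml R δ 𝒳))ᶜ ⊆ val I (Fml.one : Fml R δ 𝒳)
    exact fun v _ => trivial
  | rel r x =>
    intro ψ
    have hval : val I (norm rep Y Z (Fml.rel r x) ψ) = val I (Fml.rel r x) :=
      val_canonAtom Y Z hY hZ r x
    refine ⟨⟨isNeg_canonAtom Y Z r x, goodShape_of_isNeg_false (isNeg_canonAtom Y Z r x)⟩,
      fun _ => ?_⟩
    refine ⟨fun p hp => hp ▸ diag_of_diagonal, fun p hp => hp ▸ diag_of_diagonal,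
      ?_, ?_, fun _ => by rw [hval]⟩
    · rw [hval]; exact le_rfl
    · rw [cogen_rel]; exact fun v _ => trivial
  | eql x₁ x₂ =>
    intro ψ
    refine ⟨⟨rfl, goodShape_of_isNeg_false rfl⟩, fun _ => ?_⟩
    refine ⟨?_, fun p hp => hp ▸ diag_of_diagonal, fun v _ => trivial, fun v _ => trivial, ?_⟩
    · refine diag_EqGen ?_
      rintro ⟨a, b⟩ hp
      rw [Set.mem_singleton_iff, Prod.ext_iff] at hp
      obtain ⟨h1, h2⟩ := hp
      cases h1; cases h2
      exact fun v hv => hv.2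
    · intro _
      show (val I ψ ∩ val I (Fml.eql x₁ x₂)) ∩ val I ψ = _
      ext v
      constructor
      · rintro ⟨⟨h1, h2⟩, h3⟩; exact ⟨h2, h3⟩
      · rintro ⟨h1, h2⟩; exact ⟨⟨h2, h1⟩, h2⟩
  | not φ₁ ih =>
    intro ψ
    obtain ⟨⟨hs₁, hg₁⟩, hrest₁⟩ := ih ψ
    rw [norm_not']
    constructor
    · refine ⟨?_, goodShape_compl hg₁⟩
      rw [isNeg_compl_eq hg₁, hs₁]
      rfl
    · intro hok
      obtain ⟨hd₁, he₁, hb₁, hc₁, ha₁⟩ := hrest₁ hok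
      rw [val_compl]
      refine ⟨fun p hp => he₁ p hp, fun p hp => by rw [compl_compl]; exact hd₁ p hp,
        hc₁, by rw [compl_compl]; exact hb₁, fun hFV => ?_⟩
      show (val I (norm rep Y Z φ₁ ψ))ᶜ ∩ val I ψ = (val I φ₁)ᶜ ∩ val I ψ
      exact compl_inter_eq_of_inter_eq (ha₁ hFV)
  | and φ₁ φ₂ ih₁ ih₂ =>
    intro ψ
    set ψ₁ := exAll (FV ψ \ FV φ₁) ψ with hψ₁def
    set ψ₂ := exAll (FV ψ \ FV φ₂) ψ with hψ₂def
    set α₁ := norm rep Y Z φ₁ ψ₁ with hα₁def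
    set α₂ := norm rep Y Z φ₂ ψ₂ with hα₂def
    obtain ⟨⟨hs₁, hg₁⟩, hrest₁⟩ := ih₁ ψ₁
    obtain ⟨⟨hs₂, hg₂⟩, hrest₂⟩ := ih₂ ψ₂
    rw [norm_and']
    constructor
    · refine ⟨?_, goodShape_normAnd⟩
      rw [isNeg_normAnd, hs₁, hs₂]
      rfl
    · intro hok
      obtain ⟨hok₁, hok₂⟩ := hok
      obtain ⟨hd₁, he₁, hb₁, hc₁, ha₁⟩ := hrest₁ hok₁
      obtain ⟨hd₂, he₂, hb₂, hc₂, ha₂⟩ := hrest₂ hok₂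
      have PQ₁ := genco_polarity (I := I) hrep φ₁ hok₁
      have PQ₂ := genco_polarity (I := I) hrep φ₂ hok₂
      have hsub₁ : val I ψ ⊆ val I ψ₁ := val_exAll_supset _ _
      have hsub₂ : val I ψ ⊆ val I ψ₂ := val_exAll_supset _ _
      have hfv₁ : (↑(FV ψ₁) : Set 𝒳) ⊆ ↑(FV φ₁) := by
        rw [hψ₁def, FV_exAll, Finset.sdiff_sdiff_self_left]
        intro y hy
        exact_mod_cast (Finset.mem_inter.mp (by exact_mod_cast hy)).2
      have hfv₂ : (↑(FV ψ₂) : Set 𝒳) ⊆ ↑(FV φ₂) := by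
        rw [hψ₂def, FV_exAll, Finset.sdiff_sdiff_self_left]
        intro y hy
        exact_mod_cast (Finset.mem_inter.mp (by exact_mod_cast hy)).2
      have hαψ₁ : val I α₁ ∩ val I ψ = val I φ₁ ∩ val I ψ := by
        ext v
        constructor
        · rintro ⟨hα, hψ⟩
          have := Set.ext_iff.mp (ha₁ hfv₁) v
          exact ⟨(this.mp ⟨hα, hsub₁ hψ⟩).1, hψ⟩
        · rintro ⟨hφ, hψ⟩
          have := Set.ext_iff.mp (ha₁ hfv₁) v
          exact ⟨(this.mpr ⟨hφ, hsub₁ hψ⟩).1, hψ⟩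
      have hαψ₂ : val I α₂ ∩ val I ψ = val I φ₂ ∩ val I ψ := by
        ext v
        constructor
        · rintro ⟨hα, hψ⟩
          have := Set.ext_iff.mp (ha₂ hfv₂) v
          exact ⟨(this.mp ⟨hα, hsub₂ hψ⟩).1, hψ⟩
        · rintro ⟨hφ, hψ⟩
          have := Set.ext_iff.mp (ha₂ hfv₂) v
          exact ⟨(this.mpr ⟨hφ, hsub₂ hψ⟩).1, hψ⟩
      -- claim (a), uniform in the branches
      have hA : val I (normAnd α₁ α₂ ψ) ∩ val I ψ = val I (φ₁.and φ₂) ∩ val I ψ := by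
        rw [val_normAnd_inter, val_and]
        ext v
        have t1 := Set.ext_iff.mp hαψ₁ v
        have t2 := Set.ext_iff.mp hαψ₂ v
        simp only [Set.mem_inter_iff] at t1 t2 ⊢
        constructor
        · rintro ⟨⟨h1, h2⟩, h3⟩
          exact ⟨⟨(t1.mp ⟨h1, h3⟩).1, (t2.mp ⟨h2, h3⟩).1⟩, h3⟩
        · rintro ⟨⟨h1, h2⟩, h3⟩
          exact ⟨⟨(t1.mpr ⟨h1, h3⟩).1, (t2.mpr ⟨h2, h3⟩).1⟩, h3⟩
      -- claim (d)
      have hD : ∀ p ∈ eqR (φ₁.and φ₂), val I (normAnd α₁ α₂ ψ) ⊆ diag p.1 p.2 := by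
        cases hn1 : negb φ₁ <;> cases hn2 : negb φ₂
        · rw [normAnd_eq_ff_ff (hs₁.trans hn1) (hs₂.trans hn2)]
          refine diag_EqGen ?_
          rintro p (hp | hp)
          · exact Set.inter_subset_left.trans (hd₁ p hp)
          · exact Set.inter_subset_right.trans (hd₂ p hp)
        · rw [normAnd_eq_ff_tt (hs₁.trans hn1) (hs₂.trans hn2)]
          refine diag_EqGen ?_
          rintro p (hp | hp)
          · exact (Set.inter_subset_left.trans ((val_align_subset _ _).trans (hd₁ p hp)))
          · have := (PQ₂.1 hn2).2 hp
            rw [this]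
            exact diag_of_diagonal
        · rw [normAnd_eq_tt_ff (hs₁.trans hn1) (hs₂.trans hn2)]
          refine diag_EqGen ?_
          rintro p (hp | hp)
          · have := (PQ₁.1 hn1).2 hp
            rw [this]
            exact diag_of_diagonal
          · exact (Set.inter_subset_left.trans ((val_align_subset _ _).trans (hd₂ p hp)))
        · intro p hp
          have : eqR (φ₁.and φ₂) ⊆ idRel' :=
            EqGen_subset_id (Set.union_subset (PQ₁.1 hn1).2 (PQ₂.1 hn2).2)
          rw [this hp]
          exact diag_of_diagonal
      -- claim (e)
      have hE : ∀ p ∈ coeqR (φ₁.and φ₂), (val I (normAnd α₁ α₂ ψ))ᶜ ⊆ diag p.1 p.2 := by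
        cases hn1 : negb φ₁ <;> cases hn2 : negb φ₂
        · rintro p ⟨hp, _⟩
          rw [(PQ₁.2 hn1).2 hp]
          exact diag_of_diagonal
        · rintro p ⟨hp, _⟩
          rw [(PQ₁.2 hn1).2 hp]
          exact diag_of_diagonal
        · rintro p ⟨_, hp⟩
          rw [(PQ₂.2 hn2).2 hp]
          exact diag_of_diagonal
        · rw [normAnd_eq_tt_tt (hs₁.trans hn1) (hs₂.trans hn2)]
          rintro p ⟨hp1, hp2⟩
          intro v hv
          rw [val_not, compl_compl, val_or] at hv
          rcases hv with hv | hv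
          · have : v ∈ (val I α₁)ᶜ := by
              have := (val_align_subset (compl α₁) ψ) hv
              rwa [val_compl] at this
            exact he₁ p hp1 this
          · have : v ∈ (val I α₂)ᶜ := by
              have := (val_align_subset (compl α₂) ψ) hv
              rwa [val_compl] at this
            exact he₂ p hp2 this
      -- claim (b)
      have hB : val I (normAnd α₁ α₂ ψ) ⊆ val I (gen rep (φ₁.and φ₂)) := by
        rw [gen_and, val_and, val_and]
        intro v hv
        have hconj : v ∈ val I (conjList (rep (EqGen (eqR (φ₁.and φ₂) \
            eqR ((gen rep φ₁).and (gen rep φ₂)))))) := by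
          refine val_conjList_mem ?_
          intro p hp
          obtain ⟨hpE, _⟩ := rep_sdiff_spec hrep _ _ (eqR_equiv (φ₁.and φ₂)) hp
          exact hD p hpE hv
        refine ⟨⟨?_, ?_⟩, hconj⟩
        · cases hn1 : negb φ₁
          · cases hn2 : negb φ₂
            · rw [normAnd_eq_ff_ff (hs₁.trans hn1) (hs₂.trans hn2)] at hv
              exact hb₁ hv.1
            · rw [normAnd_eq_ff_tt (hs₁.trans hn1) (hs₂.trans hn2)] at hv
              exact hb₁ ((val_align_subset _ _) hv.1)
          · rw [(PQ₁.1 hn1).1]; trivial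
        · cases hn2 : negb φ₂
          · cases hn1 : negb φ₁
            · rw [normAnd_eq_ff_ff (hs₁.trans hn1) (hs₂.trans hn2)] at hv
              exact hb₂ hv.2
            · rw [normAnd_eq_tt_ff (hs₁.trans hn1) (hs₂.trans hn2)] at hv
              exact hb₂ ((val_align_subset _ _) hv.1)
          · rw [(PQ₂.1 hn2).1]; trivial
      -- claim (c)
      have hC : (val I (normAnd α₁ α₂ ψ))ᶜ ⊆ val I (cogen rep (φ₁.and φ₂)) := by
        rw [cogen_and]
        cases hn1 : negb φ₁
        · rw [val_orStar_univ_left (PQ₁.2 hn1).1]; exact fun v _ => trivial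
        · cases hn2 : negb φ₂
          · rw [val_orStar_univ_right (PQ₂.2 hn2).1]; exact fun v _ => trivial
          · rw [normAnd_eq_tt_tt (hs₁.trans hn1) (hs₂.trans hn2)]
            intro v hv
            rw [val_not, compl_compl, val_or] at hv
            rcases hv with hv | hv
            · have : v ∈ (val I α₁)ᶜ := by
                have := (val_align_subset (compl α₁) ψ) hv
                rwa [val_compl] at this
              exact val_orStar_left _ _ (hc₁ this)
            · have : v ∈ (val I α₂)ᶜ := by
                have := (val_align_subset (compl α₂) ψ) hv
                rwa [val_compl] at this
              exact val_orStar_right _ _ (hc₂ this)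
      exact ⟨hD, hE, hB, hC, fun _ => hA⟩
  | or φ₁ φ₂ ih₁ ih₂ =>
    intro ψ
    set ψ₁ := exAll (FV ψ \ FV φ₁) ψ with hψ₁def
    set ψ₂ := exAll (FV ψ \ FV φ₂) ψ with hψ₂def
    set α₁ := norm rep Y Z φ₁ ψ₁ with hα₁def
    set α₂ := norm rep Y Z φ₂ ψ₂ with hα₂def
    obtain ⟨⟨hs₁, hg₁⟩, hrest₁⟩ := ih₁ ψ₁
    obtain ⟨⟨hs₂, hg₂⟩, hrest₂⟩ := ih₂ ψ₂
    rw [norm_or']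
    have hcc₁ : compl (compl α₁) = α₁ := compl_compl_of_goodShape hg₁
    have hcc₂ : compl (compl α₂) = α₂ := compl_compl_of_goodShape hg₂
    have hsb₁ : isNeg (compl α₁) = !negb φ₁ := by rw [isNeg_compl_eq hg₁, hs₁]
    have hsb₂ : isNeg (compl α₂) = !negb φ₂ := by rw [isNeg_compl_eq hg₂, hs₂]
    constructor
    · constructor
      · rw [isNeg_compl_eq goodShape_normAnd, isNeg_normAnd, hsb₁, hsb₂]
        show (!(!negb φ₁ && !negb φ₂)) = negb (φ₁.or φ₂)
        show (!(!negb φ₁ && !negb φ₂)) = (negb φ₁ || negb φ₂)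
        cases negb φ₁ <;> cases negb φ₂ <;> rfl
      · exact goodShape_compl goodShape_normAnd
    · intro hok
      obtain ⟨hok₁, hok₂⟩ := hok
      obtain ⟨hd₁, he₁, hb₁, hc₁, ha₁⟩ := hrest₁ hok₁
      obtain ⟨hd₂, he₂, hb₂, hc₂, ha₂⟩ := hrest₂ hok₂
      have PQ₁ := genco_polarity (I := I) hrep φ₁ hok₁
      have PQ₂ := genco_polarity (I := I) hrep φ₂ hok₂
      have hsub₁ : val I ψ ⊆ val I ψ₁ := val_exAll_supset _ _
      have hsub₂ : val I ψ ⊆ val I ψ₂ := val_exAll_supset _ _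
      have hfv₁ : (↑(FV ψ₁) : Set 𝒳) ⊆ ↑(FV φ₁) := by
        rw [hψ₁def, FV_exAll, Finset.sdiff_sdiff_self_left]
        intro y hy
        exact_mod_cast (Finset.mem_inter.mp (by exact_mod_cast hy)).2
      have hfv₂ : (↑(FV ψ₂) : Set 𝒳) ⊆ ↑(FV φ₂) := by
        rw [hψ₂def, FV_exAll, Finset.sdiff_sdiff_self_left]
        intro y hy
        exact_mod_cast (Finset.mem_inter.mp (by exact_mod_cast hy)).2
      have hαψ₁ : val I α₁ ∩ val I ψ = val I φ₁ ∩ val I ψ := by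
        ext v
        constructor
        · rintro ⟨hα, hψ⟩
          have := Set.ext_iff.mp (ha₁ hfv₁) v
          exact ⟨(this.mp ⟨hα, hsub₁ hψ⟩).1, hψ⟩
        · rintro ⟨hφ, hψ⟩
          have := Set.ext_iff.mp (ha₁ hfv₁) v
          exact ⟨(this.mpr ⟨hφ, hsub₁ hψ⟩).1, hψ⟩
      have hαψ₂ : val I α₂ ∩ val I ψ = val I φ₂ ∩ val I ψ := by
        ext v
        constructor
        · rintro ⟨hα, hψ⟩
          have := Set.ext_iff.mp (ha₂ hfv₂) v
          exact ⟨(this.mp ⟨hα, hsub₂ hψ⟩).1, hψ⟩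
        · rintro ⟨hφ, hψ⟩
          have := Set.ext_iff.mp (ha₂ hfv₂) v
          exact ⟨(this.mpr ⟨hφ, hsub₂ hψ⟩).1, hψ⟩
      set N := normAnd (compl α₁) (compl α₂) ψ with hNdef
      have hvalN : val I (compl N) = (val I N)ᶜ := val_compl N
      -- claim (a)
      have hA : val I (compl N) ∩ val I ψ = val I (φ₁.or φ₂) ∩ val I ψ := by
        have h1 : val I N ∩ val I ψ = ((val I φ₁)ᶜ ∩ (val I φ₂)ᶜ) ∩ val I ψ := by
          rw [hNdef, val_normAnd_inter, val_compl, val_compl]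
          ext v
          have t1 := Set.ext_iff.mp (compl_inter_eq_of_inter_eq hαψ₁) v
          have t2 := Set.ext_iff.mp (compl_inter_eq_of_inter_eq hαψ₂) v
          simp only [Set.mem_inter_iff] at t1 t2 ⊢
          constructor
          · rintro ⟨⟨x1, x2⟩, x3⟩
            exact ⟨⟨(t1.mp ⟨x1, x3⟩).1, (t2.mp ⟨x2, x3⟩).1⟩, x3⟩
          · rintro ⟨⟨x1, x2⟩, x3⟩
            exact ⟨⟨(t1.mpr ⟨x1, x3⟩).1, (t2.mpr ⟨x2, x3⟩).1⟩, x3⟩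
        rw [hvalN, val_or]
        have := compl_inter_eq_of_inter_eq h1
        rw [Set.compl_inter, compl_compl, compl_compl] at this
        exact this
      -- claims (d),(e),(b),(c) by polarity cases
      have hD : ∀ p ∈ eqR (φ₁.or φ₂), val I (compl N) ⊆ diag p.1 p.2 := by
        cases hn1 : negb φ₁
        · cases hn2 : negb φ₂
          · -- both non-negated: N = .not (.or (align α₁ ψ) (align α₂ ψ))
            rintro p ⟨hp1, hp2⟩
            rw [hNdef, normAnd_eq_tt_tt (by rw [hsb₁, hn1]; rfl) (by rw [hsb₂, hn2]; rfl),
              hcc₁, hcc₂]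
            intro v hv
            rw [val_compl, val_not, compl_compl, val_or] at hv
            rcases hv with hv | hv
            · exact hd₁ p hp1 ((val_align_subset _ _) hv)
            · exact hd₂ p hp2 ((val_align_subset _ _) hv)
          · rintro p ⟨_, hp⟩
            rw [(PQ₂.1 hn2).2 hp]
            exact diag_of_diagonal
        · rintro p ⟨hp, _⟩
          rw [(PQ₁.1 hn1).2 hp]
          exact diag_of_diagonal
      have hE : ∀ p ∈ coeqR (φ₁.or φ₂), (val I (compl N))ᶜ ⊆ diag p.1 p.2 := by
        have hEN : (val I (compl N))ᶜ = val I N := by rw [hvalN, compl_compl]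
        cases hn1 : negb φ₁ <;> cases hn2 : negb φ₂
        · refine diag_EqGen ?_
          have : coeqR φ₁ ⊆ idRel' := (PQ₁.2 hn1).2
          rintro p (hp | hp)
          · rw [(PQ₁.2 hn1).2 hp]; exact diag_of_diagonal
          · rw [(PQ₂.2 hn2).2 hp]; exact diag_of_diagonal
        · refine diag_EqGen ?_
          rintro p (hp | hp)
          · rw [(PQ₁.2 hn1).2 hp]; exact diag_of_diagonal
          · -- negb φ₂ = true: N = .and (align (compl α₁)?) ...
            rw [hEN, hNdef, normAnd_eq_tt_ff (by rw [hsb₁, hn1]; rfl) (by rw [hsb₂, hn2]; rfl),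
              hcc₁]
            intro v hv
            rw [val_and] at hv
            have : v ∈ val I (compl α₂) := (val_align_subset _ _) hv.1
            rw [val_compl] at this
            exact he₂ p hp this
        · refine diag_EqGen ?_
          rintro p (hp | hp)
          · rw [hEN, hNdef, normAnd_eq_ff_tt (by rw [hsb₁, hn1]; rfl) (by rw [hsb₂, hn2]; rfl),
              hcc₂]
            intro v hv
            rw [val_and] at hv
            have : v ∈ val I (compl α₁) := (val_align_subset _ _) hv.1
            rw [val_compl] at this
            exact he₁ p hp this
          · rw [(PQ₂.2 hn2).2 hp]; exact diag_of_diagonal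
        · refine diag_EqGen ?_
          rintro p (hp | hp)
          · rw [hEN, hNdef, normAnd_eq_ff_ff (by rw [hsb₁, hn1]; rfl) (by rw [hsb₂, hn2]; rfl)]
            intro v hv
            rw [val_and] at hv
            have : v ∈ val I (compl α₁) := hv.1
            rw [val_compl] at this
            exact he₁ p hp this
          · rw [hEN, hNdef, normAnd_eq_ff_ff (by rw [hsb₁, hn1]; rfl) (by rw [hsb₂, hn2]; rfl)]
            intro v hv
            rw [val_and] at hv
            have : v ∈ val I (compl α₂) := hv.2
            rw [val_compl] at this
            exact he₂ p hp this
      have hB : val I (compl N) ⊆ val I (gen rep (φ₁.or φ₂)) := by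
        rw [gen_or]
        cases hn1 : negb φ₁
        · cases hn2 : negb φ₂
          · rw [hNdef, normAnd_eq_tt_tt (by rw [hsb₁, hn1]; rfl) (by rw [hsb₂, hn2]; rfl),
              hcc₁, hcc₂]
            intro v hv
            rw [val_compl, val_not, compl_compl, val_or] at hv
            rcases hv with hv | hv
            · exact val_orStar_left _ _ (hb₁ ((val_align_subset _ _) hv))
            · exact val_orStar_right _ _ (hb₂ ((val_align_subset _ _) hv))
          · rw [val_orStar_univ_right (PQ₂.1 hn2).1]; exact fun v _ => trivial
        · rw [val_orStar_univ_left (PQ₁.1 hn1).1]; exact fun v _ => trivial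
      have hC : (val I (compl N))ᶜ ⊆ val I (cogen rep (φ₁.or φ₂)) := by
        have hEN : (val I (compl N))ᶜ = val I N := by rw [hvalN, compl_compl]
        rw [cogen_or, val_and, val_and, hEN]
        intro v hv
        have hconj : v ∈ val I (conjList (rep (EqGen (eqR ((Fml.not φ₁).and (Fml.not φ₂)) \
            eqR ((cogen rep φ₁).and (cogen rep φ₂)))))) := by
          refine val_conjList_mem ?_
          intro p hp
          obtain ⟨hpE, _⟩ := rep_sdiff_spec hrep _ _
            (eqR_equiv ((Fml.not φ₁).and (Fml.not φ₂))) hp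
          have hpco : p ∈ coeqR (φ₁.or φ₂) := hpE
          have := hE p hpco
          rw [hEN] at this
          exact this hv
        refine ⟨⟨?_, ?_⟩, hconj⟩
        · cases hn1 : negb φ₁
          · cases hn2 : negb φ₂
            · rw [hNdef, normAnd_eq_tt_tt (by rw [hsb₁, hn1]; rfl)
                (by rw [hsb₂, hn2]; rfl)] at hv
              rw [(PQ₁.2 hn1).1]; trivial
            · rw [hNdef, normAnd_eq_tt_ff (by rw [hsb₁, hn1]; rfl)
                (by rw [hsb₂, hn2]; rfl)] at hv
              rw [(PQ₁.2 hn1).1]; trivial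
          · cases hn2 : negb φ₂
            · rw [hNdef, normAnd_eq_ff_tt (by rw [hsb₁, hn1]; rfl)
                (by rw [hsb₂, hn2]; rfl)] at hv
              have : v ∈ val I (compl α₁) := (val_align_subset _ _) hv.1
              rw [val_compl] at this
              exact hc₁ this
            · rw [hNdef, normAnd_eq_ff_ff (by rw [hsb₁, hn1]; rfl)
                (by rw [hsb₂, hn2]; rfl)] at hv
              have : v ∈ val I (compl α₁) := hv.1
              rw [val_compl] at this
              exact hc₁ this
        · cases hn2 : negb φ₂
          · rw [(PQ₂.2 hn2).1]; trivial
          · cases hn1 : negb φ₁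
            · rw [hNdef, normAnd_eq_tt_ff (by rw [hsb₁, hn1]; rfl)
                (by rw [hsb₂, hn2]; rfl)] at hv
              have : v ∈ val I (compl α₂) := (val_align_subset _ _) hv.1
              rw [val_compl] at this
              exact hc₂ this
            · rw [hNdef, normAnd_eq_ff_ff (by rw [hsb₁, hn1]; rfl)
                (by rw [hsb₂, hn2]; rfl)] at hv
              have : v ∈ val I (compl α₂) := hv.2
              rw [val_compl] at this
              exact hc₂ this
      exact ⟨hD, hE, hB, hC, fun _ => hA⟩
  | ex x φ₁ ih =>
    intro ψ
    set χ := exAll (FV (gen rep φ₁) \ {x}) (gen rep φ₁) with hχdef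
    set ψ' := χ.and ψ with hψ'def
    set α' := norm rep Y Z φ₁ ψ' with hα'def
    obtain ⟨⟨hs₁, hg₁⟩, hrest₁⟩ := ih ψ'
    rw [norm_ex']
    refine ⟨⟨rfl, goodShape_of_isNeg_false rfl⟩, ?_⟩
    intro hok
    obtain ⟨hx, hok₁⟩ := hok
    obtain ⟨hd₁, he₁, hb₁, hc₁, ha₁⟩ := hrest₁ hok₁
    constructor
    · refine diag_EqGen ?_
      rintro ⟨a, b⟩ ⟨hp, hxa, hxb⟩
      rintro v ⟨u, hu, hagree⟩
      have := hd₁ _ hp hu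
      show v a = v b
      rw [← hagree a hxa, ← hagree b hxb]
      exact this
    constructor
    · refine diag_EqGen ?_
      rintro ⟨a, b⟩ ⟨hp, hxa, hxb⟩
      intro v hv
      have hvφ : v ∉ val I α' := fun h => hv (val_ex_self h)
      exact he₁ _ hp hvφ
    constructor
    · rw [gen_ex]
      rintro v ⟨u, hu, hagree⟩
      exact ⟨u, hb₁ hu, hagree⟩
    constructor
    · rw [cogen_ex]
      intro v hv
      have hvφ : v ∉ val I α' := fun h => hv (val_ex_self h)
      exact ⟨v, hc₁ hvφ, fun _ _ => rfl⟩
    · intro hFV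
      have hxψ : x ∉ FV ψ := by
        intro hmem
        have := hFV (by exact_mod_cast hmem)
        rw [FV] at this
        simp only [Finset.coe_sdiff, Finset.coe_singleton, Set.mem_diff,
          Set.mem_singleton_iff] at this
        exact this.2 trivial
      have hfv' : (↑(FV ψ') : Set 𝒳) ⊆ ↑(FV φ₁) := by
        rw [hψ'def, FV]
        intro y hy
        rw [Finset.coe_union, Set.mem_union] at hy
        rcases hy with hy | hy
        · rw [hχdef, FV_exAll] at hy
          have hy' := Finset.mem_sdiff.mp (by exact_mod_cast hy)
          exact_mod_cast (FV_genco hrep φ₁).1 hy'.1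
        · have := hFV hy
          rw [FV] at this
          rw [Finset.coe_sdiff] at this
          exact this.1
      ext v
      simp only [Set.mem_inter_iff]
      constructor
      · rintro ⟨⟨u, hu, hagree⟩, hψv⟩
        have huψ : u ∈ val I ψ := by
          refine (val_congr ψ (u := u) (v := v) ?_).mpr hψv
          intro y hy
          exact hagree y (fun h => hxψ (h ▸ hy))
        have huχ : u ∈ val I χ := val_exAll_supset _ _ (hb₁ hu)
        have : u ∈ val I α' ∩ val I ψ' := ⟨hu, huχ, huψ⟩
        rw [ha₁ hfv'] at this
        exact ⟨⟨u, this.1, hagree⟩, hψv⟩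
      · rintro ⟨⟨u, hu, hagree⟩, hψv⟩
        have huψ : u ∈ val I ψ := by
          refine (val_congr ψ (u := u) (v := v) ?_).mpr hψv
          intro y hy
          exact hagree y (fun h => hxψ (h ▸ hy))
        have huχ : u ∈ val I χ := val_exAll_supset _ _ ((genco_sound hrep φ₁).1 hu)
        have : u ∈ val I φ₁ ∩ val I ψ' := ⟨hu, huχ, huψ⟩
        rw [← ha₁ hfv'] at this
        exact ⟨⟨u, this.1, hagree⟩, hψv⟩

end Main
theorem stmt18 {R : Type} [Fintype R] {δ : R → ℕ} {𝒳 : Type} [Fintype 𝒳]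
    [LinearOrder 𝒳] (rep : Set (𝒳 × 𝒳) → List (𝒳 × 𝒳)) (hrep : MinRep rep)
    (Y : ∀ r : R, Fin (δ r) → 𝒳) (hY : ∀ r, Function.Injective (Y r))
    (Z : ∀ r : R, (Fin (δ r) → 𝒳) → Fin (δ r) → 𝒳) (hZ : GoodZ Y Z)
    (φ : Fml R δ 𝒳) (hφ : Allowed φ)
    (M : Type) [Fintype M] [Nonempty M] (I : ∀ r : R, Set (Fin (δ r) → M)) :
    val I (norm rep Y Z φ (gen rep φ)) = val I φ := by
  obtain ⟨hfv, hok⟩ := hφ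
  obtain ⟨_, hrest⟩ := norm_main (I := I) hrep hY hZ φ (gen rep φ)
  obtain ⟨_, _, hb, _, ha⟩ := hrest hok
  have hFV : (↑(FV (gen rep φ)) : Set 𝒳) ⊆ ↑(FV φ) := by
    intro y hy
    exact_mod_cast (FV_genco hrep φ).1 (by exact_mod_cast hy)
  have h1 := ha hFV
  have hg := (genco_sound (I := I) hrep φ).1
  apply Set.Subset.antisymm
  · intro v hv
    have : v ∈ val I φ ∩ val I (gen rep φ) := by rw [← h1]; exact ⟨hv, hb hv⟩
    exact this.1
  · intro v hv
    have : v ∈ val I (norm rep Y Z φ (gen rep φ)) ∩ val I (gen rep φ) := by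
      rw [h1]; exact ⟨hv, hg hv⟩
    exact this.1
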